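/- arXiv:1108.1099 — 5 statements merged into one kernel-verified Lean document; each statement's English description precedes it below -/
import Mathlib

section
/- For a path x: [0,1] → R^d of bounded variation and fixed s < t, the map Φ sending a word w = a_{i_1}...a_{i_n} to the iterated integral ∫_{s<t_1<...<t_n<t} dx^{i_1}...dx^{i_n} (and the empty word to 1), extended linearly, is an algebra homomorphism from the shuffle algebra (R⟨A⟩, +, *) to (R, +, ·). -/
/-!
Write `Φ_r(w) = I w r`. Both sides of `Φ_r(u ш v) = Φ_r(u) Φ_r(v)` obey the same recursion in
the last letters, so induction on the lengths of `u` and `v` applies. On the left,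
`ua ш vb = (u ш vb) a + (ua ш v) b` and `Φ_r(w a) = ∫_s^r Φ(w) dxᵃ`, so by linearity
`Φ_r(ua ш vb) = ∫_s^r Φ(u ш vb) dxᵃ + ∫_s^r Φ(ua ш v) dxᵇ`. On the right, `F = I (ua)` and
`G = I (vb)` satisfy the integration by parts formula `F G = ∫ G dF + ∫ F dG` for
`dF = I u dxᵃ`, `dG = I v dxᵇ`: on a fine grid `Δ(F G) = G ΔF + F ΔG + ΔF ΔG`, the errors
`ΔF - I u Δxᵃ` sum to at most the oscillation of `I u` times the variation of `xᵃ`, and the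
quadratic covariation `∑ ΔF ΔG` vanishes because `G` is continuous and `F` has bounded variation.
-/

open Finset Set

/-- The subword of `w` determined by a set `s` of positions (taken in increasing order). -/
def subword {A : Type*} [DecidableEq A] (w : List A) (s : Finset (Fin w.length)) : List A :=
  ((List.finRange w.length).filter (fun i => i ∈ s)).map w.get

/-- The shuffle coefficient `(w; u, v)`. -/
def shuffleCoeff {A : Type*} [DecidableEq A] (w u v : List A) : ℕ :=
  ((Finset.univ : Finset (Finset (Fin w.length))).filter
    (fun s => subword w s = u ∧ subword w sᶜ = v)).card

/-- A grid (partition) of the interval `[s,t]`. -/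
structure Grid (s t : ℝ) where
  n : ℕ
  pts : Fin (n + 1) → ℝ
  mono : Monotone pts
  first : pts 0 = s
  last : pts (Fin.last n) = t

/-- The mesh of a grid is `< δ`. -/
def Grid.MeshLT {s t : ℝ} (D : Grid s t) (δ : ℝ) : Prop :=
  ∀ i : Fin D.n, D.pts i.succ - D.pts i.castSucc < δ

/-- `v` is the Riemann–Stieltjes integral `∫_s^t h dx`, as the limit of left-point Riemann sums
along partitions of `[s,t]` of mesh tending to `0`. -/
def IsRSIntegral (h x : ℝ → ℝ) (s t v : ℝ) : Prop :=
  ∀ ε > (0:ℝ), ∃ δ > (0:ℝ), ∀ D : Grid s t, D.MeshLT δ →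
    |(∑ i : Fin D.n, h (D.pts i.castSucc) * (x (D.pts i.succ) - x (D.pts i.castSucc))) - v| < ε

open Filter Topology

lemma tendsto_zero_of_forall_eventually_abs_le_mul {α : Type*} {l : Filter α} {φ : α → ℝ}
    (C : ℝ) (h : ∀ ε > 0, ∀ᶠ a in l, |φ a| ≤ ε * C) : Tendsto φ l (𝓝 0) := by
  refine Metric.tendsto_nhds.mpr fun ε hε => ?_
  filter_upwards [h (ε / (|C| + 1)) (by positivity)] with a ha
  rw [Real.dist_eq, sub_zero]
  calc |φ a| ≤ ε / (|C| + 1) * |C| := ha.trans (by gcongr; exact le_abs_self C)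
    _ < ε := by
      rw [div_mul_eq_mul_div, div_lt_iff₀ (by positivity)]
      nlinarith [abs_nonneg C]

namespace Grid

variable {σ τ ρ : ℝ}

/-- The grid points indexed by `ℕ`, constant beyond `D.n`, so that `D.pt` is monotone on `ℕ`. -/
def pt (D : Grid σ τ) (j : ℕ) : ℝ := D.pts ⟨min j D.n, by omega⟩

lemma pt_of_le (D : Grid σ τ) {j : ℕ} (hj : j ≤ D.n) : D.pt j = D.pts ⟨j, by omega⟩ := by
  simp [pt, Nat.min_eq_left hj]

lemma pt_mono (D : Grid σ τ) : Monotone D.pt := fun _ _ hij =>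
  D.mono (Fin.mk_le_mk.mpr (min_le_min_right _ hij))

@[simp] lemma pt_zero (D : Grid σ τ) : D.pt 0 = σ := by
  simpa [pt] using D.first

@[simp] lemma pt_n (D : Grid σ τ) : D.pt D.n = τ := by
  rw [D.pt_of_le le_rfl]
  exact D.last

lemma pt_mem (D : Grid σ τ) (j : ℕ) : D.pt j ∈ Icc σ τ :=
  ⟨D.first.symm.trans_le (D.mono (Fin.zero_le _)), (D.mono (Fin.le_last _)).trans_eq D.last⟩

def sum (D : Grid σ τ) (Φ : ℝ → ℝ → ℝ) : ℝ :=
  ∑ j ∈ Finset.range D.n, Φ (D.pt j) (D.pt (j + 1))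

lemma sum_fin (D : Grid σ τ) (Φ : ℝ → ℝ → ℝ) :
    ∑ i : Fin D.n, Φ (D.pts i.castSucc) (D.pts i.succ) = D.sum Φ := by
  rw [sum, ← Fin.sum_univ_eq_sum_range]
  refine Finset.sum_congr rfl fun i _ => ?_
  rw [D.pt_of_le (by omega : (i : ℕ) ≤ D.n), D.pt_of_le (by omega : (i : ℕ) + 1 ≤ D.n)]
  rfl

lemma sum_sub (D : Grid σ τ) (F : ℝ → ℝ) : D.sum (fun a b => F b - F a) = F τ - F σ := by
  simp [sum, Finset.sum_range_sub (fun j => F (D.pt j))]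

lemma abs_sum_le (D : Grid σ τ) {Φ Ψ : ℝ → ℝ → ℝ}
    (h : ∀ j < D.n, |Φ (D.pt j) (D.pt (j + 1))| ≤ Ψ (D.pt j) (D.pt (j + 1))) :
    |D.sum Φ| ≤ D.sum Ψ :=
  (Finset.abs_sum_le_sum_abs _ _).trans
    (Finset.sum_le_sum fun j hj => h j (Finset.mem_range.mp hj))

lemma sum_eVariationOn (D : Grid σ τ) {X : ℝ → ℝ} (hX : BoundedVariationOn X (Icc σ τ)) :
    D.sum (fun a b => (eVariationOn X (Icc a b)).toReal) = (eVariationOn X (Icc σ τ)).toReal := by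
  rw [sum, ← ENNReal.toReal_sum, eVariationOn.sum' X D.pt_mono, pt_zero, pt_n]
  exact fun j _ => ne_top_of_le_ne_top hX
    (eVariationOn.mono X (Icc_subset_Icc (D.pt_mem j).1 (D.pt_mem (j + 1)).2))

lemma meshLT_iff (D : Grid σ τ) (δ : ℝ) :
    D.MeshLT δ ↔ ∀ j < D.n, D.pt (j + 1) - D.pt j < δ := by
  refine ⟨fun h j hj => ?_, fun h i => ?_⟩
  · simpa [D.pt_of_le hj.le, D.pt_of_le (Nat.succ_le_of_lt hj)] using h ⟨j, hj⟩
  · have := h i i.2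
    rwa [D.pt_of_le (by omega : (i : ℕ) ≤ D.n), D.pt_of_le (by omega : (i : ℕ) + 1 ≤ D.n)] at this

def ofMonotone (u : ℕ → ℝ) (hu : Monotone u) (n : ℕ) (h0 : u 0 = σ) (hn : u n = τ) :
    Grid σ τ :=
  ⟨n, fun i => u i, fun _ _ hij => hu hij, h0, hn⟩

lemma pt_ofMonotone {u : ℕ → ℝ} {hu : Monotone u} {n : ℕ} {h0 : u 0 = σ} {hn : u n = τ}
    {j : ℕ} (hj : j ≤ n) : (ofMonotone u hu n h0 hn).pt j = u j := by
  simp [pt, ofMonotone, Nat.min_eq_left hj]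

lemma sum_ofMonotone {u : ℕ → ℝ} {hu : Monotone u} {n : ℕ} {h0 : u 0 = σ} {hn : u n = τ}
    (Φ : ℝ → ℝ → ℝ) :
    (ofMonotone u hu n h0 hn).sum Φ = ∑ j ∈ Finset.range n, Φ (u j) (u (j + 1)) :=
  Finset.sum_congr rfl fun j hj => by
    rw [pt_ofMonotone (Finset.mem_range.mp hj).le, pt_ofMonotone (Finset.mem_range.mp hj)]

def concatPts (A : Grid σ ρ) (B : Grid ρ τ) (j : ℕ) : ℝ :=
  if j ≤ A.n then A.pt j else B.pt (j - A.n)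

lemma concatPts_add (A : Grid σ ρ) (B : Grid ρ τ) (k : ℕ) :
    concatPts A B (A.n + k) = B.pt k := by
  rcases k.eq_zero_or_pos with rfl | hk
  · simp [concatPts]
  · simp [concatPts, show ¬ A.n + k ≤ A.n by omega]

lemma concatPts_mono (A : Grid σ ρ) (B : Grid ρ τ) : Monotone (concatPts A B) := by
  intro i j hij
  unfold concatPts
  split_ifs with hi hj hj
  · exact A.pt_mono hij
  · exact (A.pt_mem i).2.trans (B.pt_mem _).1
  · omega
  · exact B.pt_mono (by omega)

def concat (A : Grid σ ρ) (B : Grid ρ τ) : Grid σ τ :=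
  ofMonotone (concatPts A B) (concatPts_mono A B) (A.n + B.n) (by simp [concatPts])
    (by rw [concatPts_add, pt_n])

lemma sum_concat (A : Grid σ ρ) (B : Grid ρ τ) (Φ : ℝ → ℝ → ℝ) :
    (A.concat B).sum Φ = A.sum Φ + B.sum Φ := by
  rw [concat, sum_ofMonotone, Finset.sum_range_add]
  congr 1
  · refine Finset.sum_congr rfl fun j hj => ?_
    have hj := Finset.mem_range.mp hj
    simp [concatPts, hj.le, Nat.succ_le_of_lt hj]
  · simp only [concatPts_add, add_assoc, sum]

lemma MeshLT.concat {A : Grid σ ρ} {B : Grid ρ τ} {δ : ℝ} (hA : A.MeshLT δ) (hB : B.MeshLT δ) :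
    (A.concat B).MeshLT δ := by
  rw [meshLT_iff] at hA hB ⊢
  intro j (hj : j < A.n + B.n)
  have hpt : ∀ k ≤ A.n + B.n, (A.concat B).pt k = concatPts A B k := fun _ hk => pt_ofMonotone hk
  rw [hpt j hj.le, hpt (j + 1) hj]
  rcases lt_or_ge j A.n with hjA | hjA
  · simpa [concatPts, hjA.le, Nat.succ_le_of_lt hjA] using hA j hjA
  · obtain ⟨k, rfl⟩ := Nat.exists_eq_add_of_le hjA
    rw [concatPts_add, add_assoc, concatPts_add]
    exact hB k (by omega)

lemma exists_meshLT (h : σ ≤ τ) {δ : ℝ} (hδ : 0 < δ) : ∃ D : Grid σ τ, D.MeshLT δ := by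
  obtain ⟨n, hn⟩ := exists_nat_gt ((τ - σ) / δ)
  have hn' : (τ - σ) / (n + 1) < δ := by
    rw [div_lt_iff₀ (by positivity)]
    rw [div_lt_iff₀ hδ] at hn
    nlinarith
  have hstep : 0 ≤ (τ - σ) / (n + 1) := div_nonneg (by linarith) (by positivity)
  have hu : Monotone fun j : ℕ => σ + j * ((τ - σ) / (n + 1)) := fun i j hij =>
    add_le_add_right (mul_le_mul_of_nonneg_right (Nat.cast_le.mpr hij) hstep) σ
  refine ⟨ofMonotone _ hu (n + 1) (by simp) (by push_cast; field_simp; ring), ?_⟩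
  rw [meshLT_iff]
  intro j hj
  simp only [ofMonotone] at hj
  rw [pt_ofMonotone hj.le, pt_ofMonotone (Nat.succ_le_of_lt hj)]
  push_cast
  linarith

def fine (σ τ : ℝ) : Filter (Grid σ τ) := ⨅ δ > 0, 𝓟 {D | D.MeshLT δ}

lemma hasBasis_fine : (fine σ τ).HasBasis (fun δ : ℝ => 0 < δ) fun δ => {D | D.MeshLT δ} :=
  hasBasis_biInf_principal'
    (fun δ hδ δ' hδ' => ⟨min δ δ', lt_min hδ hδ',
      fun _ hD i => (hD i).trans_le (min_le_left _ _),
      fun _ hD i => (hD i).trans_le (min_le_right _ _)⟩)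
    ⟨1, one_pos⟩

lemma fine_neBot (h : σ ≤ τ) : (fine σ τ).NeBot :=
  hasBasis_fine.neBot_iff.mpr fun hδ => exists_meshLT h hδ

lemma tendsto_concat : Tendsto (fun p : Grid σ ρ × Grid ρ τ => p.1.concat p.2)
    (fine σ ρ ×ˢ fine ρ τ) (fine σ τ) :=
  (hasBasis_fine.prod hasBasis_fine).tendsto_iff hasBasis_fine |>.mpr
    fun δ hδ => ⟨(δ, δ), ⟨hδ, hδ⟩, fun _ hp => hp.1.concat hp.2⟩

def rsum (D : Grid σ τ) (h x : ℝ → ℝ) : ℝ := D.sum fun a b => h a * (x b - x a)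

lemma eventually_abs_sub_le {f : ℝ → ℝ} (hf : ContinuousOn f (Icc σ τ)) {ε : ℝ} (hε : 0 < ε) :
    ∀ᶠ D : Grid σ τ in fine σ τ,
      ∀ j < D.n, ∀ u ∈ Icc (D.pt j) (D.pt (j + 1)), |f u - f (D.pt j)| ≤ ε := by
  obtain ⟨δ, hδ, hfδ⟩ := Metric.uniformContinuousOn_iff.mp
    (isCompact_Icc.uniformContinuousOn_of_continuous hf) ε hε
  refine hasBasis_fine.eventually_iff.mpr ⟨δ, hδ, fun D hD j hj u hu => ?_⟩
  have hmesh := (D.meshLT_iff δ).mp hD j hj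
  refine (hfδ u ⟨(D.pt_mem j).1.trans hu.1, hu.2.trans (D.pt_mem (j + 1)).2⟩ _ (D.pt_mem j)
    ?_).le
  rw [Real.dist_eq, abs_of_nonneg (by linarith [hu.1])]
  linarith [hu.2]

lemma tendsto_sum_mul_of_tendsto_sum_abs {G : ℝ → ℝ} {e : ℝ → ℝ → ℝ} {M : ℝ}
    (hG : ∀ u ∈ Icc σ τ, |G u| ≤ M)
    (he : Tendsto (fun D : Grid σ τ => D.sum fun a b => |e a b|) (fine σ τ) (𝓝 0)) :
    Tendsto (fun D : Grid σ τ => D.sum fun a b => G a * e a b) (fine σ τ) (𝓝 0) := by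
  refine squeeze_zero_norm' (Eventually.of_forall fun D => ?_) (by simpa using he.const_mul M)
  rw [Real.norm_eq_abs, show (M * D.sum fun a b => |e a b|) = D.sum fun a b => M * |e a b| from
    Finset.mul_sum _ _ _]
  refine D.abs_sum_le fun j _ => ?_
  rw [abs_mul]
  exact mul_le_mul_of_nonneg_right (hG _ (D.pt_mem j)) (abs_nonneg _)

end Grid

section RiemannStieltjes

variable {h g x : ℝ → ℝ} {σ τ ρ v w : ℝ}

theorem isRSIntegral_iff_tendsto :
    IsRSIntegral h x σ τ v ↔ Tendsto (fun D : Grid σ τ => D.rsum h x) (Grid.fine σ τ) (𝓝 v) := by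
  rw [Grid.hasBasis_fine.tendsto_iff Metric.nhds_basis_ball]
  simp only [IsRSIntegral, Grid.rsum, ← Grid.sum_fin, Set.mem_ofPred_eq, Metric.mem_ball,
    Real.dist_eq]

lemma isRSIntegral_const (c : ℝ) : IsRSIntegral (fun _ => c) x σ τ (c * (x τ - x σ)) :=
  isRSIntegral_iff_tendsto.mpr <| tendsto_const_nhds.congr fun D => by
    rw [Grid.rsum, ← D.sum_sub x, Grid.sum, Grid.sum, Finset.mul_sum]

namespace IsRSIntegral

lemma sub (hv : IsRSIntegral h x σ τ v) (hw : IsRSIntegral g x σ τ w) :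
    IsRSIntegral (fun u => h u - g u) x σ τ (v - w) := by
  rw [isRSIntegral_iff_tendsto] at *
  refine (hv.sub hw).congr fun D => ?_
  simp only [Grid.rsum, Grid.sum, ← Finset.sum_sub_distrib, sub_mul]

lemma const_mul (hv : IsRSIntegral h x σ τ v) (c : ℝ) :
    IsRSIntegral (fun u => c * h u) x σ τ (c * v) := by
  rw [isRSIntegral_iff_tendsto] at *
  refine (hv.const_mul c).congr fun D => ?_
  simp only [Grid.rsum, Grid.sum, Finset.mul_sum, mul_assoc]

lemma sum {ι : Type*} (s : Finset ι) {h : ι → ℝ → ℝ} {v : ι → ℝ}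
    (hv : ∀ i ∈ s, IsRSIntegral (h i) x σ τ (v i)) :
    IsRSIntegral (fun u => ∑ i ∈ s, h i u) x σ τ (∑ i ∈ s, v i) := by
  simp only [isRSIntegral_iff_tendsto] at *
  refine (tendsto_finsetSum s hv).congr fun D => ?_
  simp only [Grid.rsum, Grid.sum, Finset.sum_mul]
  exact Finset.sum_comm

lemma congr (hv : IsRSIntegral h x σ τ v) (hhg : ∀ u ∈ Icc σ τ, h u = g u) :
    IsRSIntegral g x σ τ v := by
  rw [isRSIntegral_iff_tendsto] at *
  refine hv.congr fun D => Finset.sum_congr (s₁ := Finset.range D.n) rfl fun j _ => ?_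
  simp only [hhg _ (D.pt_mem j)]

lemma unique (hστ : σ ≤ τ) (hv : IsRSIntegral h x σ τ v) (hw : IsRSIntegral h x σ τ w) :
    v = w :=
  haveI := Grid.fine_neBot hστ
  tendsto_nhds_unique (isRSIntegral_iff_tendsto.mp hv) (isRSIntegral_iff_tendsto.mp hw)

lemma eq_zero_of_self (hv : IsRSIntegral h x σ σ v) : v = 0 := by
  refine hv.unique le_rfl (isRSIntegral_iff_tendsto.mpr (tendsto_const_nhds.congr fun D => ?_))
  refine (Finset.sum_eq_zero (s := Finset.range D.n) fun j _ => ?_).symm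
  dsimp only
  rw [(D.pt_mem j).1.antisymm' (D.pt_mem j).2, (D.pt_mem (j + 1)).1.antisymm' (D.pt_mem (j + 1)).2,
    sub_self, mul_zero]

lemma interval_sub_left (hv : IsRSIntegral h x σ τ v) (hw : IsRSIntegral h x σ ρ w)
    (hσρ : σ ≤ ρ) : IsRSIntegral h x ρ τ (v - w) := by
  have := Grid.fine_neBot hσρ
  rw [isRSIntegral_iff_tendsto] at *
  have hpair : Tendsto (fun p : Grid σ ρ × Grid ρ τ => (p.1.concat p.2).rsum h x - p.1.rsum h x)
      (Grid.fine σ ρ ×ˢ Grid.fine ρ τ) (𝓝 (v - w)) :=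
    (hv.comp Grid.tendsto_concat).sub (hw.comp tendsto_fst)
  simp only [Grid.rsum, Grid.sum_concat, add_sub_cancel_left] at hpair
  rwa [← map_snd_prod (Grid.fine σ ρ) (Grid.fine ρ τ), tendsto_map'_iff]

lemma abs_le (hστ : σ ≤ τ) (hx : BoundedVariationOn x (Icc σ τ)) {K : ℝ}
    (hK : ∀ u ∈ Icc σ τ, |h u| ≤ K) (hv : IsRSIntegral h x σ τ v) :
    |v| ≤ K * (eVariationOn x (Icc σ τ)).toReal := by
  have := Grid.fine_neBot hστ
  have hK0 : 0 ≤ K := (abs_nonneg _).trans (hK σ ⟨le_rfl, hστ⟩)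
  refine le_of_tendsto ((continuous_abs.tendsto v).comp (isRSIntegral_iff_tendsto.mp hv))
    (Eventually.of_forall fun D => ?_)
  calc |D.rsum h x| ≤ D.sum fun a b => K * (eVariationOn x (Icc a b)).toReal :=
        D.abs_sum_le fun j _ => ?_
    _ = K * (eVariationOn x (Icc σ τ)).toReal := by
        rw [← D.sum_eVariationOn hx, Grid.sum, Grid.sum, Finset.mul_sum]
  have hsub : Icc (D.pt j) (D.pt (j + 1)) ⊆ Icc σ τ :=
    Icc_subset_Icc (D.pt_mem j).1 (D.pt_mem (j + 1)).2
  have hle : D.pt j ≤ D.pt (j + 1) := D.pt_mono j.le_succ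
  rw [abs_mul]
  refine mul_le_mul (hK _ (D.pt_mem j)) ?_ (abs_nonneg _) hK0
  rw [← Real.dist_eq]
  exact (hx.mono hsub).dist_le ⟨hle, le_rfl⟩ ⟨le_rfl, hle⟩

end IsRSIntegral

end RiemannStieltjes

def IsRSPrimitive (f X : ℝ → ℝ) (σ τ : ℝ) (F : ℝ → ℝ) : Prop :=
  ∀ r ∈ Icc σ τ, IsRSIntegral f X σ r (F r)

namespace IsRSPrimitive

variable {f g X Y F G : ℝ → ℝ} {σ τ : ℝ}

lemma mono (hF : IsRSPrimitive f X σ τ F) {τ' : ℝ} (h : τ' ≤ τ) : IsRSPrimitive f X σ τ' F :=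
  fun r hr => hF r ⟨hr.1, hr.2.trans h⟩

lemma apply_left (hF : IsRSPrimitive f X σ τ F) (hστ : σ ≤ τ) : F σ = 0 :=
  (hF σ ⟨le_rfl, hστ⟩).eq_zero_of_self

lemma abs_sub_sub_mul_le (hF : IsRSPrimitive f X σ τ F) (hX : BoundedVariationOn X (Icc σ τ))
    {r r' c K : ℝ} (hr : σ ≤ r) (hrr' : r ≤ r') (hr' : r' ≤ τ)
    (hK : ∀ u ∈ Icc r r', |f u - c| ≤ K) :
    |F r' - F r - c * (X r' - X r)| ≤ K * (eVariationOn X (Icc r r')).toReal :=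
  (((hF r' ⟨hr.trans hrr', hr'⟩).interval_sub_left (hF r ⟨hr, hrr'.trans hr'⟩) hr).sub
    (isRSIntegral_const c)).abs_le hrr' (hX.mono (Icc_subset_Icc hr hr')) hK

lemma abs_sub_le (hF : IsRSPrimitive f X σ τ F) (hX : BoundedVariationOn X (Icc σ τ))
    {r r' M : ℝ} (hr : σ ≤ r) (hrr' : r ≤ r') (hr' : r' ≤ τ)
    (hM : ∀ u ∈ Icc σ τ, |f u| ≤ M) :
    |F r' - F r| ≤ M * (eVariationOn X (Icc r r')).toReal := by
  simpa using hF.abs_sub_sub_mul_le hX hr hrr' hr' (c := 0)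
    fun u hu => by simpa using hM u ⟨hr.trans hu.1, hu.2.trans hr'⟩

lemma continuousOn (hF : IsRSPrimitive f X σ τ F) (hXc : ContinuousOn X (Icc σ τ))
    (hX : BoundedVariationOn X (Icc σ τ)) {M : ℝ} (hM : ∀ u ∈ Icc σ τ, |f u| ≤ M) :
    ContinuousOn F (Icc σ τ) := by
  intro r hr
  have hvar : Tendsto (fun y => M * ((eVariationOn X (Icc σ τ ∩ Icc r y)).toReal
      + (eVariationOn X (Icc σ τ ∩ Icc y r)).toReal)) (𝓝[Icc σ τ] r) (𝓝 0) := by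
    have hR := hX.tendsto_eVariationOn_Icc_zero_right r ((hXc r hr).mono inter_subset_left)
    have hL := hX.tendsto_eVariationOn_Icc_zero_left ((hXc r hr).mono inter_subset_left)
    simpa using (((ENNReal.tendsto_toReal ENNReal.zero_ne_top).comp hR).add
      ((ENNReal.tendsto_toReal ENNReal.zero_ne_top).comp hL)).const_mul M
  refine tendsto_sub_nhds_zero_iff.mp (squeeze_zero_norm' ?_ hvar)
  filter_upwards [self_mem_nhdsWithin] with y hy
  rw [Real.norm_eq_abs]
  have hM0 : 0 ≤ M := (abs_nonneg _).trans (hM r hr)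
  rcases le_total r y with hry | hyr
  · rw [inter_eq_right.mpr (Icc_subset_Icc hr.1 hy.2)]
    have := hF.abs_sub_le hX hr.1 hry hy.2 hM
    nlinarith [ENNReal.toReal_nonneg (a := eVariationOn X (Icc σ τ ∩ Icc y r))]
  · rw [inter_eq_right.mpr (Icc_subset_Icc hy.1 hr.2), abs_sub_comm]
    have := hF.abs_sub_le hX hy.1 hyr hr.2 hM
    nlinarith [ENNReal.toReal_nonneg (a := eVariationOn X (Icc σ τ ∩ Icc r y))]

lemma tendsto_sum_abs_sub_sub_mul (hF : IsRSPrimitive f X σ τ F)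
    (hf : ContinuousOn f (Icc σ τ)) (hX : BoundedVariationOn X (Icc σ τ)) :
    Tendsto (fun D : Grid σ τ => D.sum fun a b => |F b - F a - f a * (X b - X a)|)
      (Grid.fine σ τ) (𝓝 0) := by
  refine tendsto_zero_of_forall_eventually_abs_le_mul (eVariationOn X (Icc σ τ)).toReal
    fun ε hε => (Grid.eventually_abs_sub_le hf hε).mono fun D hD => ?_
  rw [← D.sum_eVariationOn hX, Grid.sum, Grid.sum, Finset.mul_sum]
  refine (abs_of_nonneg (Finset.sum_nonneg fun j _ => abs_nonneg _)).trans_le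
    (Finset.sum_le_sum fun j hj => ?_)
  exact hF.abs_sub_sub_mul_le hX (D.pt_mem j).1 (D.pt_mono j.le_succ) (D.pt_mem (j + 1)).2
    (hD j (Finset.mem_range.mp hj))

lemma tendsto_sum_sub_mul_sub (hF : IsRSPrimitive f X σ τ F) (hστ : σ ≤ τ)
    (hX : BoundedVariationOn X (Icc σ τ)) {M : ℝ} (hM : ∀ u ∈ Icc σ τ, |f u| ≤ M)
    (hG : ContinuousOn G (Icc σ τ)) :
    Tendsto (fun D : Grid σ τ => D.sum fun a b => (F b - F a) * (G b - G a))
      (Grid.fine σ τ) (𝓝 0) := by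
  have hM0 : 0 ≤ M := (abs_nonneg _).trans (hM σ ⟨le_rfl, hστ⟩)
  refine tendsto_zero_of_forall_eventually_abs_le_mul (M * (eVariationOn X (Icc σ τ)).toReal)
    fun ε hε => (Grid.eventually_abs_sub_le hG hε).mono fun D hD => ?_
  rw [← D.sum_eVariationOn hX, Grid.sum, Grid.sum, Finset.mul_sum, Finset.mul_sum]
  refine (Finset.abs_sum_le_sum_abs _ _).trans (Finset.sum_le_sum fun j hj => ?_)
  have hle := D.pt_mono j.le_succ
  rw [abs_mul, mul_comm ε]
  exact mul_le_mul (hF.abs_sub_le hX (D.pt_mem j).1 hle (D.pt_mem (j + 1)).2 hM)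
    (hD j (Finset.mem_range.mp hj) _ ⟨hle, le_rfl⟩) (abs_nonneg _)
    (mul_nonneg hM0 ENNReal.toReal_nonneg)

theorem mul_eq (hστ : σ ≤ τ) (hF : IsRSPrimitive f X σ τ F) (hG : IsRSPrimitive g Y σ τ G)
    (hX : BoundedVariationOn X (Icc σ τ)) (hY : BoundedVariationOn Y (Icc σ τ))
    (hf : ContinuousOn f (Icc σ τ)) (hg : ContinuousOn g (Icc σ τ))
    (hFc : ContinuousOn F (Icc σ τ)) (hGc : ContinuousOn G (Icc σ τ)) {J₁ J₂ : ℝ}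
    (hJ₁ : IsRSIntegral (fun u => f u * G u) X σ τ J₁)
    (hJ₂ : IsRSIntegral (fun u => F u * g u) Y σ τ J₂) :
    F τ * G τ = J₁ + J₂ := by
  have := Grid.fine_neBot hστ
  obtain ⟨MF, hMF⟩ := isCompact_Icc.exists_bound_of_continuousOn hFc
  obtain ⟨MG, hMG⟩ := isCompact_Icc.exists_bound_of_continuousOn hGc
  obtain ⟨Mf, hMf⟩ := isCompact_Icc.exists_bound_of_continuousOn hf
  have hsplit : ∀ D : Grid σ τ, F τ * G τ = D.rsum (fun u => f u * G u) X
      + D.rsum (fun u => F u * g u) Y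
      + ((D.sum fun a b => G a * (F b - F a - f a * (X b - X a)))
        + (D.sum fun a b => F a * (G b - G a - g a * (Y b - Y a)))
        + D.sum fun a b => (F b - F a) * (G b - G a)) := fun D => by
    have htel := D.sum_sub fun u => F u * G u
    rw [hF.apply_left hστ, zero_mul, sub_zero] at htel
    rw [← htel]
    simp only [Grid.rsum, Grid.sum, ← Finset.sum_add_distrib]
    exact Finset.sum_congr rfl fun j _ => by ring
  have hlim := ((isRSIntegral_iff_tendsto.mp hJ₁).add (isRSIntegral_iff_tendsto.mp hJ₂)).add
    (((Grid.tendsto_sum_mul_of_tendsto_sum_abs hMG (hF.tendsto_sum_abs_sub_sub_mul hf hX)).add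
      (Grid.tendsto_sum_mul_of_tendsto_sum_abs hMF (hG.tendsto_sum_abs_sub_sub_mul hg hY))).add
      (hF.tendsto_sum_sub_mul_sub hστ hX hMf hGc))
  rw [← funext hsplit, add_zero, add_zero, add_zero] at hlim
  exact tendsto_nhds_unique tendsto_const_nhds hlim

end IsRSPrimitive

noncomputable def finsetFinSuccEquiv (n : ℕ) : Bool × Finset (Fin n) ≃ Finset (Fin (n + 1)) where
  toFun p := if p.1 then insert 0 (p.2.map (Fin.succEmb n)) else p.2.map (Fin.succEmb n)
  invFun S := (0 ∈ S, S.preimage Fin.succ (Fin.succ_injective n).injOn)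
  left_inv := by
    rintro ⟨_ | _, T⟩ <;> ext <;> simp [Fin.succ_ne_zero]
  right_inv S := by
    ext i
    cases i using Fin.cases <;> by_cases h : (0 : Fin (n + 1)) ∈ S <;> simp [h, Fin.succ_ne_zero]

lemma finsetFinSuccEquiv_compl (n : ℕ) (b : Bool) (T : Finset (Fin n)) :
    (finsetFinSuccEquiv n (b, T))ᶜ = finsetFinSuccEquiv n (!b, Tᶜ) := by
  ext i
  cases i using Fin.cases <;> cases b <;> simp [finsetFinSuccEquiv, Fin.succ_ne_zero]

lemma List.cons_eq_iff_head?_tail {A : Type*} {c : A} {l u : List A} :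
    c :: l = u ↔ u.head? = some c ∧ l = u.tail := by
  cases u <;> simp [eq_comm]

section Shuffle

variable {A : Type*} [DecidableEq A]

lemma subword_cons_finsetFinSuccEquiv (c : A) (w : List A) (b : Bool)
    (T : Finset (Fin w.length)) :
    subword (c :: w) (finsetFinSuccEquiv w.length (b, T)) =
      (if b then [c] else []) ++ subword w T := by
  cases b <;> simp [subword, finsetFinSuccEquiv, List.finRange_succ, List.filter_map,
    Function.comp_def, Fin.succ_ne_zero]

lemma shuffleCoeff_nil (u v : List A) :
    shuffleCoeff [] u v = if u = [] ∧ v = [] then 1 else 0 := by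
  by_cases hu : u = [] <;> by_cases hv : v = [] <;>
    simp [shuffleCoeff, subword, hu, hv, eq_comm, Finset.filter_true_of_mem,
      Finset.filter_false_of_mem]

lemma shuffleCoeff_cons (c : A) (w u v : List A) :
    shuffleCoeff (c :: w) u v =
      (if u.head? = some c then shuffleCoeff w u.tail v else 0) +
        (if v.head? = some c then shuffleCoeff w u v.tail else 0) := by
  simp only [shuffleCoeff, Finset.card_filter]
  change ∑ S : Finset (Fin (w.length + 1)), _ = _
  rw [← (finsetFinSuccEquiv w.length).sum_comp, Fintype.sum_prod_type, Fintype.sum_bool]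
  simp only [finsetFinSuccEquiv_compl, subword_cons_finsetFinSuccEquiv, Bool.not_true,
    Bool.not_false, if_true, List.singleton_append,
    List.cons_eq_iff_head?_tail, and_assoc, and_left_comm (b := v.head? = some c)]
  congr 1 <;> split_ifs <;> simp_all

lemma ite_head?_ite_getLast? {M : Type*} [Zero M] (u : List A) (c₀ c : A) (x : List A → M) :
    (if u.head? = some c₀ then if u.tail.getLast? = some c then x u.tail.dropLast else 0 else 0) =
      if u.getLast? = some c then
        if u.dropLast.head? = some c₀ then x u.dropLast.tail else 0 else 0 := by
  rcases u with _ | ⟨a, _ | ⟨a', u⟩⟩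
  · simp
  · simp
  · by_cases h : a = c₀ <;> by_cases h' : (a' :: u).getLast? = some c <;> simp [h, h']

lemma shuffleCoeff_append_singleton (w : List A) (c : A) (u v : List A) :
    shuffleCoeff (w ++ [c]) u v =
      (if u.getLast? = some c then shuffleCoeff w u.dropLast v else 0) +
        (if v.getLast? = some c then shuffleCoeff w u v.dropLast else 0) := by
  induction w generalizing u v with
  | nil =>
    rcases u with _ | ⟨a, _ | ⟨a', u⟩⟩ <;> rcases v with _ | ⟨b, _ | ⟨b', v⟩⟩ <;>
      simp [shuffleCoeff_cons, shuffleCoeff_nil]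
  | cons c₀ w ih =>
    rw [List.cons_append, shuffleCoeff_cons, ih, ih, shuffleCoeff_cons, shuffleCoeff_cons]
    simp only [ite_add_zero]
    rw [ite_head?_ite_getLast? u c₀ c (fun l => shuffleCoeff w l v),
      ite_head?_ite_getLast? v c₀ c (fun l => shuffleCoeff w u l)]
    simp only [← ite_and, and_comm]
    abel

lemma shuffleCoeff_nil_left (w v : List A) : shuffleCoeff w [] v = if w = v then 1 else 0 := by
  induction w generalizing v with
  | nil => simp [shuffleCoeff_nil, eq_comm]
  | cons c w ih => cases v <;> simp [shuffleCoeff_cons, ih, eq_comm, ite_and]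

lemma shuffleCoeff_nil_right (w u : List A) : shuffleCoeff w u [] = if w = u then 1 else 0 := by
  induction w generalizing u with
  | nil => simp [shuffleCoeff_nil, eq_comm]
  | cons c w ih => cases u <;> simp [shuffleCoeff_cons, ih, eq_comm, ite_and]

end Shuffle

section EvalShuffle

variable {A : Type*} [Fintype A] {R : Type*} [Semiring R]

lemma sum_ofFn_congr {m n : ℕ} (h : m = n) (φ : List A → R) :
    ∑ f : Fin m → A, φ (List.ofFn f) = ∑ f : Fin n → A, φ (List.ofFn f) := by
  subst h; rfl

lemma sum_ofFn_succ (n : ℕ) (φ : List A → R) :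
    ∑ f : Fin (n + 1) → A, φ (List.ofFn f) = ∑ c : A, ∑ f : Fin n → A, φ (List.ofFn f ++ [c]) := by
  rw [← (Fin.snocEquiv fun _ => A).sum_comp, Fintype.sum_prod_type]
  simp only [Fin.snocEquiv, Equiv.coe_fn_mk, List.ofFn_succ_last, Fin.snoc_castSucc,
    Fin.snoc_last]

variable [DecidableEq A]

lemma sum_ofFn_ite_eq (v : List A) (φ : List A → R) :
    ∑ f : Fin v.length → A, (if List.ofFn f = v then φ (List.ofFn f) else 0) = φ v := by
  rw [Finset.sum_eq_single_of_mem v.get (Finset.mem_univ _) fun f _ hf => if_neg fun h =>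
    hf (List.ofFn_injective (h.trans (List.ofFn_get v).symm)), List.ofFn_get, if_pos rfl]

/-- The linear extension of `Ψ` to `R⟨A⟩`, evaluated at the shuffle product
`u ш v = ∑_w (w; u, v) w`. -/
def evalShuffle (Ψ : List A → R) (u v : List A) : R :=
  ∑ f : Fin (u.length + v.length) → A, (shuffleCoeff (List.ofFn f) u v : R) * Ψ (List.ofFn f)

lemma evalShuffle_nil_left (Ψ : List A → R) (v : List A) : evalShuffle Ψ [] v = Ψ v := by
  rw [evalShuffle,
    sum_ofFn_congr (n := v.length) (by simp) fun w => (shuffleCoeff w [] v : R) * Ψ w]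
  simp only [shuffleCoeff_nil_left, Nat.cast_ite, Nat.cast_one, Nat.cast_zero, ite_mul, one_mul,
    zero_mul, sum_ofFn_ite_eq]

lemma evalShuffle_nil_right (Ψ : List A → R) (u : List A) : evalShuffle Ψ u [] = Ψ u := by
  rw [evalShuffle,
    sum_ofFn_congr (n := u.length) (by simp) fun w => (shuffleCoeff w u [] : R) * Ψ w]
  simp only [shuffleCoeff_nil_right, Nat.cast_ite, Nat.cast_one, Nat.cast_zero, ite_mul, one_mul,
    zero_mul, sum_ofFn_ite_eq]

lemma evalShuffle_append_singleton (Ψ : List A → R) (u v : List A) (a b : A) :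
    evalShuffle Ψ (u ++ [a]) (v ++ [b]) =
      evalShuffle (fun w => Ψ (w ++ [a])) u (v ++ [b]) +
        evalShuffle (fun w => Ψ (w ++ [b])) (u ++ [a]) v := by
  rw [evalShuffle, evalShuffle, evalShuffle,
    sum_ofFn_congr (n := u.length + v.length + 1 + 1) (by simp; omega)
      fun w => (shuffleCoeff w (u ++ [a]) (v ++ [b]) : R) * Ψ w,
    sum_ofFn_succ _ fun w => (shuffleCoeff w (u ++ [a]) (v ++ [b]) : R) * Ψ w,
    sum_ofFn_congr (n := u.length + v.length + 1) (by simp; omega)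
      fun w => (shuffleCoeff w u (v ++ [b]) : R) * Ψ (w ++ [a]),
    sum_ofFn_congr (n := u.length + v.length + 1) (by simp; omega)
      fun w => (shuffleCoeff w (u ++ [a]) v : R) * Ψ (w ++ [b])]
  simp only [shuffleCoeff_append_singleton, List.getLast?_concat, List.dropLast_concat,
    Option.some.injEq, Nat.cast_add, Nat.cast_ite, Nat.cast_zero, add_mul, ite_mul, zero_mul,
    Finset.sum_add_distrib]
  rw [Finset.sum_comm, Finset.sum_comm (γ := A)]
  simp

lemma isRSIntegral_evalShuffle {Ψ : List A → ℝ → ℝ} {Ψ' : List A → ℝ} {x : ℝ → ℝ} {σ τ : ℝ}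
    (h : ∀ w, IsRSIntegral (Ψ w) x σ τ (Ψ' w)) (u v : List A) :
    IsRSIntegral (fun r => evalShuffle (Ψ · r) u v) x σ τ (evalShuffle Ψ' u v) :=
  IsRSIntegral.sum _ fun _ _ => (h _).const_mul _

end EvalShuffle

structure IsIteratedRSIntegral {A : Type*} (x : A → ℝ → ℝ) (s t : ℝ) (I : List A → ℝ → ℝ) :
    Prop where
  nil : ∀ r ∈ Icc s t, I [] r = 1
  append_singleton : ∀ w i, IsRSPrimitive (I w) (x i) s t (I (w ++ [i]))

namespace IsIteratedRSIntegral

variable {A : Type*} {x : A → ℝ → ℝ} {s t : ℝ} {I : List A → ℝ → ℝ}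

lemma continuousOn (hI : IsIteratedRSIntegral x s t I) (hxc : ∀ i, ContinuousOn (x i) (Icc s t))
    (hxbv : ∀ i, BoundedVariationOn (x i) (Icc s t)) (w : List A) :
    ContinuousOn (I w) (Icc s t) := by
  induction w using List.reverseRecOn with
  | nil => exact continuousOn_const.congr hI.nil
  | append_singleton w i ih =>
    obtain ⟨M, hM⟩ := isCompact_Icc.exists_bound_of_continuousOn ih
    exact (hI.append_singleton w i).continuousOn (hxc i) (hxbv i) hM

theorem evalShuffle_eq_mul [Fintype A] [DecidableEq A] (hI : IsIteratedRSIntegral x s t I)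
    (hxc : ∀ i, ContinuousOn (x i) (Icc s t)) (hxbv : ∀ i, BoundedVariationOn (x i) (Icc s t))
    (u v : List A) {r : ℝ} (hr : r ∈ Icc s t) :
    evalShuffle (I · r) u v = I u r * I v r := by
  have hIc := hI.continuousOn hxc hxbv
  induction u using List.reverseRecOn generalizing v r with
  | nil => rw [evalShuffle_nil_left, hI.nil r hr, one_mul]
  | append_singleton u a ihu =>
    induction v using List.reverseRecOn generalizing r with
    | nil => rw [evalShuffle_nil_right, hI.nil r hr, mul_one]
    | append_singleton v b ihv =>
      have hsr : Icc s r ⊆ Icc s t := Icc_subset_Icc le_rfl hr.2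
      rw [evalShuffle_append_singleton]
      refine ((hI.append_singleton u a).mono hr.2).mul_eq hr.1
        ((hI.append_singleton v b).mono hr.2) ((hxbv a).mono hsr) ((hxbv b).mono hsr)
        ((hIc u).mono hsr) ((hIc v).mono hsr) ((hIc _).mono hsr) ((hIc _).mono hsr) ?_ ?_ |>.symm
      · exact (isRSIntegral_evalShuffle (fun w => hI.append_singleton w a r hr) u (v ++ [b])).congr
          fun ρ hρ => ihu (v ++ [b]) (hsr hρ)
      · exact (isRSIntegral_evalShuffle (fun w => hI.append_singleton w b r hr) (u ++ [a]) v).congr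
          fun ρ hρ => ihv (hsr hρ)

end IsIteratedRSIntegral

/-- for a bounded-variation path `x : [0,1] → ℝ^d` and fixed `s < t`, the linear
map `Φ` sending a word `w = i₁…iₙ` to the iterated (Riemann–Stieltjes) integral
`∫_{s<t₁<⋯<tₙ<t} dx^{i₁}…dx^{iₙ}` (and the empty word to `1`) is an algebra homomorphism
from the shuffle algebra `(ℝ⟨A⟩,+,*)` to `(ℝ,+,·)`; equivalently, on basis words,
`Φ(u * v) = Σ_w (w;u,v) Φ(w) = Φ(u)·Φ(v)`. -/
theorem iterated_integrals_shuffle_homomorphism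
    (d : ℕ) (x : Fin d → ℝ → ℝ)
    (hcont : ∀ i, ContinuousOn (x i) (Icc 0 1))
    (hBV : ∀ i, BoundedVariationOn (x i) (Icc 0 1))
    (s t : ℝ) (hs : 0 ≤ s) (hst : s < t) (ht : t ≤ 1)
    -- `I w r` is the iterated integral `∫_{s < t₁ < ⋯ < tₙ < r} dx^{i₁} ⋯ dx^{iₙ}` for the
    -- word `w = i₁…iₙ`, characterized recursively by Riemann–Stieltjes integration:
    (I : List (Fin d) → ℝ → ℝ)
    (hI0 : ∀ r, I [] r = 1)
    (hIrec : ∀ (w : List (Fin d)) (i : Fin d) (r : ℝ), r ∈ Icc s t →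
      IsRSIntegral (I w) (x i) s r (I (w ++ [i]) r)) :
    ∀ u v : List (Fin d),
      (∑ h : Fin (u.length + v.length) → Fin d,
          (shuffleCoeff (List.ofFn h) u v : ℝ) * I (List.ofFn h) t)
        = I u t * I v t := by
  have hsub : Icc s t ⊆ Icc 0 1 := Icc_subset_Icc hs ht
  have hI : IsIteratedRSIntegral x s t I := ⟨fun r _ => hI0 r, hIrec⟩
  exact fun u v => hI.evalShuffle_eq_mul (fun i => (hcont i).mono hsub)
    (fun i => (hBV i).mono hsub) u v ⟨hst.le, le_rfl⟩
end

section
/- Let f: [0,1]² → R be continuous and set f̄(u₁,u₂,v₁,v₂) = f(u₁∧u₂, v₁∧v₂). Then for all u₁<ũ₁, u₂<ũ₂, v₁<ṽ₁, v₂<ṽ₂ in [0,1], the 4D rectangular increment of f̄ over [u₁,ũ₁]×[u₂,ũ₂]×[v₁,ṽ₁]×[v₂,ṽ₂] equals the 2D rectangular increment of f over [u,ũ]×[v,ṽ], where [u,ũ] is the intersection [u₁,ũ₁]∩[u₂,ũ₂] if nonempty and the degenerate interval [0,0] otherwise, and similarly for [v,ṽ]. -/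
open Set

noncomputable section

/-- Rectangular increment of `f : ℝ → ℝ → ℝ` over the rectangle `[a,b] × [c,d]`. -/
def inc2 (f : ℝ → ℝ → ℝ) (a b c d : ℝ) : ℝ := f b d - f b c - f a d + f a c

/-- 4D rectangular increment of `g : ℝ⁴ → ℝ` over the box
`[a₁,b₁] × [a₂,b₂] × [a₃,b₃] × [a₄,b₄]` (the alternating sum over the 16 corners,
with sign `(−1)^{number of lower endpoints}`), obtained by taking differences in each
coordinate. -/
def inc4 (g : ℝ → ℝ → ℝ → ℝ → ℝ) (a₁ b₁ a₂ b₂ a₃ b₃ a₄ b₄ : ℝ) : ℝ :=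
  inc2 (fun u₁ u₂ => inc2 (fun v₁ v₂ => g u₁ u₂ v₁ v₂) a₃ b₃ a₄ b₄) a₁ b₁ a₂ b₂

lemma inc2_min_key (h : ℝ → ℝ) (a₁ b₁ a₂ b₂ : ℝ) (h1 : a₁ < b₁) (h2 : a₂ < b₂) :
    inc2 (fun a b => h (min a b)) a₁ b₁ a₂ b₂ =
      if max a₁ a₂ ≤ min b₁ b₂ then h (min b₁ b₂) - h (max a₁ a₂) else 0 := by
  unfold inc2
  dsimp only
  rcases le_total a₁ a₂ with hc | hc
  · have e1 : min a₁ b₂ = a₁ := min_eq_left (hc.trans h2.le)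
    have e2 : min a₁ a₂ = a₁ := min_eq_left hc
    have e3 : max a₁ a₂ = a₂ := max_eq_right hc
    rw [e1, e2, e3]
    by_cases hd : a₂ ≤ min b₁ b₂
    · rw [if_pos hd, min_eq_right (hd.trans (min_le_left _ _))]; ring
    · rw [if_neg hd]
      have hb : b₁ < a₂ := by
        by_contra hx
        exact hd (le_min (le_of_not_gt hx) h2.le)
      rw [min_eq_left hb.le, min_eq_left (hb.trans h2).le]; ring
  · have e1 : min b₁ a₂ = a₂ := min_eq_right (hc.trans h1.le)
    have e2 : min a₁ a₂ = a₂ := min_eq_right hc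
    have e3 : max a₁ a₂ = a₁ := max_eq_left hc
    rw [e1, e2, e3]
    by_cases hd : a₁ ≤ min b₁ b₂
    · rw [if_pos hd, min_eq_left (hd.trans (min_le_right _ _))]; ring
    · rw [if_neg hd]
      have hb : b₂ < a₁ := by
        by_contra hx
        exact hd (le_min h1.le (le_of_not_gt hx))
      rw [min_eq_right hb.le, min_eq_right (hb.trans h1).le]; ring

/-- for continuous `f : [0,1]² → ℝ` and
`f̄(u₁,u₂,v₁,v₂) = f(u₁∧u₂, v₁∧v₂)`, the 4D rectangular increment of `f̄` over
`[u₁,U₁]×[u₂,U₂]×[v₁,V₁]×[v₂,V₂]` equals the 2D rectangular increment of `f` over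
`[u,U]×[v,V]`, where `[u,U] = [u₁,U₁]∩[u₂,U₂]` if this intersection is nonempty and
`[0,0]` otherwise, and similarly for `[v,V]`. -/
theorem inc4_min_eq_inc2
    (f : ℝ → ℝ → ℝ)
    (hf : Continuous (fun q : ℝ × ℝ => f q.1 q.2))
    (u₁ U₁ u₂ U₂ v₁ V₁ v₂ V₂ : ℝ)
    (h₁ : u₁ < U₁) (h₂ : u₂ < U₂) (h₃ : v₁ < V₁) (h₄ : v₂ < V₂)
    (hmem : ∀ z ∈ ({u₁, U₁, u₂, U₂, v₁, V₁, v₂, V₂} : Set ℝ), z ∈ Icc (0:ℝ) 1) :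
    inc4 (fun x₁ x₂ y₁ y₂ => f (min x₁ x₂) (min y₁ y₂)) u₁ U₁ u₂ U₂ v₁ V₁ v₂ V₂ =
      inc2 f
        (if max u₁ u₂ ≤ min U₁ U₂ then max u₁ u₂ else 0)
        (if max u₁ u₂ ≤ min U₁ U₂ then min U₁ U₂ else 0)
        (if max v₁ v₂ ≤ min V₁ V₂ then max v₁ v₂ else 0)
        (if max v₁ v₂ ≤ min V₁ V₂ then min V₁ V₂ else 0) := by
  set g : ℝ → ℝ := fun x =>
    if max v₁ v₂ ≤ min V₁ V₂ then f x (min V₁ V₂) - f x (max v₁ v₂) else 0 with hg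
  have step1 : inc4 (fun x₁ x₂ y₁ y₂ => f (min x₁ x₂) (min y₁ y₂)) u₁ U₁ u₂ U₂ v₁ V₁ v₂ V₂
      = inc2 (fun a b => g (min a b)) u₁ U₁ u₂ U₂ := by
    unfold inc4
    congr 1
    funext a b
    exact inc2_min_key (fun y => f (min a b) y) v₁ V₁ v₂ V₂ h₃ h₄
  rw [step1, inc2_min_key g u₁ U₁ u₂ U₂ h₁ h₂, hg]
  by_cases hu : max u₁ u₂ ≤ min U₁ U₂ <;> by_cases hv : max v₁ v₂ ≤ min V₁ V₂ <;>
    simp [hu, hv, inc2] <;> ring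

end
end

section
/- Let f: [0,1]² → R be continuous, f̄(u₁,u₂,v₁,v₂) = f(u₁∧u₂, v₁∧v₂). Then for all s<t, σ<τ and p ≥ 1, the 2D p-variation of f over [s,t]×[σ,τ] equals the 4D p-variation of f̄ over [s,t]²×[σ,τ]². -/
open Set
open scoped ENNReal

noncomputable section

/-- 2D `p`-variation of `f` over `[s,t] × [u,v]` (supremum over grid partitions). -/
def V2 (p : ℝ) (f : ℝ → ℝ → ℝ) (s t u v : ℝ) : ℝ≥0∞ :=
  ⨆ (D : Grid s t) (E : Grid u v),
    (∑ i : Fin D.n, ∑ j : Fin E.n,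
      (ENNReal.ofReal
        |inc2 f (D.pts i.castSucc) (D.pts i.succ) (E.pts j.castSucc) (E.pts j.succ)|) ^ p)
      ^ (1 / p)

/-- 4D `p`-variation of `g` over `I₁ × I₂ × I₃ × I₄` (supremum over grid partitions of the
four intervals of the sum of `p`-th powers of 4D rectangular increments). -/
def V4 (p : ℝ) (g : ℝ → ℝ → ℝ → ℝ → ℝ) (s₁ t₁ s₂ t₂ s₃ t₃ s₄ t₄ : ℝ) : ℝ≥0∞ :=
  ⨆ (D₁ : Grid s₁ t₁) (D₂ : Grid s₂ t₂) (D₃ : Grid s₃ t₃) (D₄ : Grid s₄ t₄),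
    (∑ i₁ : Fin D₁.n, ∑ i₂ : Fin D₂.n, ∑ i₃ : Fin D₃.n, ∑ i₄ : Fin D₄.n,
      (ENNReal.ofReal
        |inc4 g (D₁.pts i₁.castSucc) (D₁.pts i₁.succ) (D₂.pts i₂.castSucc) (D₂.pts i₂.succ)
          (D₃.pts i₃.castSucc) (D₃.pts i₃.succ) (D₄.pts i₄.castSucc) (D₄.pts i₄.succ)|) ^ p)
      ^ (1 / p)

/-! The increment of `(u₁, u₂, v₁, v₂) ↦ f (u₁ ∧ u₂) (v₁ ∧ v₂)` over a box `I₁ × I₂ × I₃ × I₄`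
is the increment of `f` over `(I₁ ∩ I₂) × (I₃ ∩ I₄)`, and it vanishes when either intersection
is degenerate. On diagonal boxes `I × I × J × J` this recovers the 2D increments, so `V2 ≤ V4`.
Conversely, the nondegenerate intersections of the cells of two partitions of an interval are
distinct cells of their common refinement, so each 4D sum is bounded by the 2D sum over the
common refinements, and `V4 ≤ V2`. -/

theorem Fintype.sum_comp_le_sum_of_injective {ι κ M : Type*} [Fintype ι] [Fintype κ]
    [AddCommMonoid M] [PartialOrder M] [CanonicallyOrderedAdd M]
    {φ : ι → κ} (hφ : Function.Injective φ) (g : κ → M) :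
    ∑ x, g (φ x) ≤ ∑ y, g y := by
  calc ∑ x, g (φ x) = ∑ y ∈ Finset.univ.map ⟨φ, hφ⟩, g y := by
        rw [Finset.sum_map]; rfl
    _ ≤ ∑ y, g y := Finset.sum_le_sum_of_subset (Finset.subset_univ _)

theorem Fintype.sum_le_sum_of_injective_on_subtype {ι κ M : Type*} [Fintype ι] [Fintype κ]
    [AddCommMonoid M] [PartialOrder M] [CanonicallyOrderedAdd M]
    {T : ι → M} {T' : κ → M} (P : ι → Prop) [DecidablePred P] (hT : ∀ x, ¬ P x → T x = 0)
    {φ : {x // P x} → κ} (hφ : Function.Injective φ) (hTφ : ∀ x : {x // P x}, T x = T' (φ x)) :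
    ∑ x, T x ≤ ∑ y, T' y := by
  have hzero : ∑ x : {x // ¬ P x}, T x = 0 := Finset.sum_eq_zero fun x _ => hT x x.2
  rw [← Fintype.sum_subtype_add_sum_subtype P T, hzero, add_zero]
  simpa only [hTφ] using Fintype.sum_comp_le_sum_of_injective hφ T'

lemma inc2_min (h : ℝ → ℝ) {a₁ b₁ a₂ b₂ : ℝ} (h₁ : a₁ ≤ b₁) (h₂ : a₂ ≤ b₂) :
    inc2 (fun u₁ u₂ => h (min u₁ u₂)) a₁ b₁ a₂ b₂
      = h (min b₁ b₂) - h (min (max a₁ a₂) (min b₁ b₂)) := by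
  unfold inc2
  simp only [min_def, max_def]
  split_ifs
  all_goals first | ring1 | linarith | (rw [show b₁ = a₂ by linarith]; ring1)

/-- `min (max a₁ a₂) (min b₁ b₂)` is the left end of `[a₁,b₁] ∩ [a₂,b₂]`, clamped so that an
empty intersection becomes the degenerate interval at `min b₁ b₂`. -/
lemma inc4_min (f : ℝ → ℝ → ℝ) {a₁ b₁ a₂ b₂ a₃ b₃ a₄ b₄ : ℝ}
    (h₁ : a₁ ≤ b₁) (h₂ : a₂ ≤ b₂) (h₃ : a₃ ≤ b₃) (h₄ : a₄ ≤ b₄) :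
    inc4 (fun u₁ u₂ v₁ v₂ => f (min u₁ u₂) (min v₁ v₂)) a₁ b₁ a₂ b₂ a₃ b₃ a₄ b₄
      = inc2 f (min (max a₁ a₂) (min b₁ b₂)) (min b₁ b₂)
          (min (max a₃ a₄) (min b₃ b₄)) (min b₃ b₄) := by
  have inner : ∀ u₁ u₂ : ℝ, inc2 (fun v₁ v₂ => f (min u₁ u₂) (min v₁ v₂)) a₃ b₃ a₄ b₄
      = f (min u₁ u₂) (min b₃ b₄) - f (min u₁ u₂) (min (max a₃ a₄) (min b₃ b₄)) :=
    fun u₁ u₂ => inc2_min (f (min u₁ u₂)) h₃ h₄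
  have outer₁ := inc2_min (fun y => f y (min b₃ b₄)) h₁ h₂
  have outer₂ := inc2_min (fun y => f y (min (max a₃ a₄) (min b₃ b₄))) h₁ h₂
  unfold inc4
  simp only [inner]
  simp only [inc2] at outer₁ outer₂ ⊢
  linarith

lemma inc2_self_left (f : ℝ → ℝ → ℝ) (a c d : ℝ) : inc2 f a a c d = 0 := by
  unfold inc2; ring

lemma inc2_self_right (f : ℝ → ℝ → ℝ) (a b c : ℝ) : inc2 f a b c c = 0 := by
  unfold inc2; ring

lemma inc4_min_diag (f : ℝ → ℝ → ℝ) {a b c d : ℝ} (hab : a ≤ b) (hcd : c ≤ d) :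
    inc4 (fun u₁ u₂ v₁ v₂ => f (min u₁ u₂) (min v₁ v₂)) a b a b c d c d = inc2 f a b c d := by
  rw [inc4_min f hab hab hcd hcd, min_self, min_self, max_self, max_self, min_eq_left hab,
    min_eq_left hcd]

lemma inc4_min_of_lt (f : ℝ → ℝ → ℝ) {a₁ b₁ a₂ b₂ a₃ b₃ a₄ b₄ : ℝ}
    (h₁ : a₁ ≤ b₁) (h₂ : a₂ ≤ b₂) (h₃ : a₃ ≤ b₃) (h₄ : a₄ ≤ b₄)
    (h₁₂ : max a₁ a₂ < min b₁ b₂) (h₃₄ : max a₃ a₄ < min b₃ b₄) :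
    inc4 (fun u₁ u₂ v₁ v₂ => f (min u₁ u₂) (min v₁ v₂)) a₁ b₁ a₂ b₂ a₃ b₃ a₄ b₄
      = inc2 f (max a₁ a₂) (min b₁ b₂) (max a₃ a₄) (min b₃ b₄) := by
  rw [inc4_min f h₁ h₂ h₃ h₄, min_eq_left h₁₂.le, min_eq_left h₃₄.le]

lemma inc4_min_eq_zero (f : ℝ → ℝ → ℝ) {a₁ b₁ a₂ b₂ a₃ b₃ a₄ b₄ : ℝ}
    (h₁ : a₁ ≤ b₁) (h₂ : a₂ ≤ b₂) (h₃ : a₃ ≤ b₃) (h₄ : a₄ ≤ b₄)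
    (h : ¬ (max a₁ a₂ < min b₁ b₂ ∧ max a₃ a₄ < min b₃ b₄)) :
    inc4 (fun u₁ u₂ v₁ v₂ => f (min u₁ u₂) (min v₁ v₂)) a₁ b₁ a₂ b₂ a₃ b₃ a₄ b₄ = 0 := by
  rw [inc4_min f h₁ h₂ h₃ h₄]
  rcases not_and_or.mp h with h | h
  · rw [min_eq_right (not_lt.mp h), inc2_self_left]
  · rw [min_eq_right (not_lt.mp h), inc2_self_right]

namespace Grid

variable {s t : ℝ}

lemma pts_castSucc_le_pts_succ (G : Grid s t) (i : Fin G.n) : G.pts i.castSucc ≤ G.pts i.succ :=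
  G.mono (Fin.castSucc_le_succ i)

lemma pts_le_or_le (G : Grid s t) (i : Fin G.n) (j : Fin (G.n + 1)) :
    G.pts j ≤ G.pts i.castSucc ∨ G.pts i.succ ≤ G.pts j := by
  rcases le_or_gt j i.castSucc with h | h
  · exact Or.inl (G.mono h)
  · exact Or.inr (G.mono (Fin.castSucc_lt_iff_succ_le.mp h))

lemma eq_of_subinterval (G : Grid s t) {i i' : Fin G.n} {a b : ℝ} (hab : a < b)
    (ha : G.pts i.castSucc ≤ a) (hb : b ≤ G.pts i.succ)
    (ha' : G.pts i'.castSucc ≤ a) (hb' : b ≤ G.pts i'.succ) : i = i' := by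
  by_contra hne
  rcases Fin.lt_or_lt_of_ne hne with h | h
  · linarith [G.mono (Fin.succ_le_castSucc_iff.mpr h)]
  · linarith [G.mono (Fin.succ_le_castSucc_iff.mpr h)]

lemma pts_mem_Icc (G : Grid s t) (j : Fin (G.n + 1)) : G.pts j ∈ Icc s t :=
  ⟨G.first.symm.trans_le (G.mono (Fin.zero_le j)), (G.mono (Fin.le_last j)).trans_eq G.last⟩

def ofFinset (S : Finset ℝ) (hs : s ∈ S) (ht : t ∈ S) (hS : ∀ x ∈ S, x ∈ Icc s t) :
    Grid s t where
  n := S.card - 1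
  pts := S.orderEmbOfFin (Nat.sub_add_cancel (Finset.card_pos.2 ⟨s, hs⟩)).symm
  mono := OrderEmbedding.monotone _
  first := (Finset.orderEmbOfFin_zero _ (Nat.succ_pos _)).trans <|
    le_antisymm (S.min'_le s hs) (S.le_min' _ s fun y hy => (hS y hy).1)
  last := (Finset.orderEmbOfFin_last _ (Nat.succ_pos _)).trans <|
    le_antisymm (S.max'_le _ t fun y hy => (hS y hy).2) (S.le_max' t ht)

lemma exists_ofFinset_cell {S : Finset ℝ} {hs : s ∈ S} {ht : t ∈ S}
    {hS : ∀ x ∈ S, x ∈ Icc s t} {a b : ℝ} (ha : a ∈ S) (hb : b ∈ S) (hab : a < b)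
    (hgap : ∀ x ∈ S, x ≤ a ∨ b ≤ x) :
    ∃ k, (ofFinset S hs ht hS).pts (Fin.castSucc k) = a ∧
      (ofFinset S hs ht hS).pts (Fin.succ k) = b := by
  set G := ofFinset S hs ht hS
  have hrange : range G.pts = S := Finset.range_orderEmbOfFin _ _
  have hstrict : StrictMono G.pts := OrderEmbedding.strictMono _
  obtain ⟨ja, rfl⟩ : a ∈ range G.pts := hrange ▸ ha
  obtain ⟨jb, rfl⟩ : b ∈ range G.pts := hrange ▸ hb
  have hlt : ja < jb := hstrict.lt_iff_lt.mp hab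
  set k : Fin G.n := ⟨ja, lt_of_lt_of_le hlt (Nat.lt_succ_iff.mp jb.isLt)⟩
  have hk : k.castSucc = ja := rfl
  refine ⟨k, by rw [hk], ?_⟩
  have hle : k.succ ≤ jb := Fin.castSucc_lt_iff_succ_le.mp (hk ▸ hlt)
  rcases hgap _ (hrange ▸ mem_range_self k.succ) with h | h
  · exact absurd (hstrict.le_iff_le.mp h) (hk ▸ not_le.mpr (Fin.castSucc_lt_succ (i := k)))
  · exact congrArg G.pts (le_antisymm hle (hstrict.le_iff_le.mp h))

def Overlap (G₁ G₂ : Grid s t) (x : Fin G₁.n × Fin G₂.n) : Prop :=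
  max (G₁.pts x.1.castSucc) (G₂.pts x.2.castSucc) < min (G₁.pts x.1.succ) (G₂.pts x.2.succ)

lemma exists_common_refinement (G₁ G₂ : Grid s t) :
    ∃ (M : Grid s t) (φ : {x // Overlap G₁ G₂ x} → Fin M.n), Function.Injective φ ∧
      ∀ x, M.pts (φ x).castSucc = max (G₁.pts x.1.1.castSucc) (G₂.pts x.1.2.castSucc) ∧
        M.pts (φ x).succ = min (G₁.pts x.1.1.succ) (G₂.pts x.1.2.succ) := by
  set S := Finset.univ.image G₁.pts ∪ Finset.univ.image G₂.pts
  have hmem : ∀ x, x ∈ S ↔ (∃ j, G₁.pts j = x) ∨ ∃ j, G₂.pts j = x := by simp [S]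
  have hS : ∀ x ∈ S, x ∈ Icc s t := by
    intro x hx
    rcases (hmem x).1 hx with ⟨j, rfl⟩ | ⟨j, rfl⟩ <;> exact pts_mem_Icc _ j
  let M := ofFinset S ((hmem s).2 (Or.inl ⟨0, G₁.first⟩))
    ((hmem t).2 (Or.inl ⟨Fin.last _, G₁.last⟩)) hS
  have hcell : ∀ x : {x // Overlap G₁ G₂ x}, ∃ k : Fin M.n,
      M.pts k.castSucc = max (G₁.pts x.1.1.castSucc) (G₂.pts x.1.2.castSucc) ∧
        M.pts k.succ = min (G₁.pts x.1.1.succ) (G₂.pts x.1.2.succ) := by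
    rintro ⟨⟨i₁, i₂⟩, hx⟩
    refine exists_ofFinset_cell ?_ ?_ hx ?_
    · rcases max_choice (G₁.pts i₁.castSucc) (G₂.pts i₂.castSucc) with h | h <;> rw [h, hmem]
      exacts [Or.inl ⟨_, rfl⟩, Or.inr ⟨_, rfl⟩]
    · rcases min_choice (G₁.pts i₁.succ) (G₂.pts i₂.succ) with h | h <;> rw [h, hmem]
      exacts [Or.inl ⟨_, rfl⟩, Or.inr ⟨_, rfl⟩]
    · intro x hx
      rcases (hmem x).1 hx with ⟨j, rfl⟩ | ⟨j, rfl⟩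
      · rcases G₁.pts_le_or_le i₁ j with h | h
        exacts [Or.inl (h.trans (le_max_left _ _)), Or.inr ((min_le_left _ _).trans h)]
      · rcases G₂.pts_le_or_le i₂ j with h | h
        exacts [Or.inl (h.trans (le_max_right _ _)), Or.inr ((min_le_right _ _).trans h)]
  choose φ hφ using hcell
  refine ⟨M, φ, fun x y hxy => ?_, hφ⟩
  have hlo := (hφ x).1.symm.trans (hxy ▸ (hφ y).1)
  have hhi := (hφ x).2.symm.trans (hxy ▸ (hφ y).2)
  have h₁ : x.1.1 = y.1.1 := G₁.eq_of_subinterval x.2 (le_max_left _ _) (min_le_left _ _)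
    ((le_max_left _ _).trans hlo.ge) (hhi.le.trans (min_le_left _ _))
  have h₂ : x.1.2 = y.1.2 := G₂.eq_of_subinterval x.2 (le_max_right _ _) (min_le_right _ _)
    ((le_max_right _ _).trans hlo.ge) (hhi.le.trans (min_le_right _ _))
  exact Subtype.ext (Prod.ext h₁ h₂)

end Grid

section PowerSums

variable {s t σ τ : ℝ} (p : ℝ)

def incPowSum2 (f : ℝ → ℝ → ℝ) (D : Grid s t) (E : Grid σ τ) : ℝ≥0∞ :=
  ∑ i : Fin D.n, ∑ j : Fin E.n,
    (ENNReal.ofReal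
      |inc2 f (D.pts i.castSucc) (D.pts i.succ) (E.pts j.castSucc) (E.pts j.succ)|) ^ p

def incPowSum4 (g : ℝ → ℝ → ℝ → ℝ → ℝ) (D₁ D₂ : Grid s t) (D₃ D₄ : Grid σ τ) : ℝ≥0∞ :=
  ∑ i₁ : Fin D₁.n, ∑ i₂ : Fin D₂.n, ∑ i₃ : Fin D₃.n, ∑ i₄ : Fin D₄.n,
    (ENNReal.ofReal
      |inc4 g (D₁.pts i₁.castSucc) (D₁.pts i₁.succ) (D₂.pts i₂.castSucc) (D₂.pts i₂.succ)
        (D₃.pts i₃.castSucc) (D₃.pts i₃.succ) (D₄.pts i₄.castSucc) (D₄.pts i₄.succ)|) ^ p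

lemma incPowSum2_le_incPowSum4_min (f : ℝ → ℝ → ℝ) (D : Grid s t) (E : Grid σ τ) :
    incPowSum2 p f D E ≤
      incPowSum4 p (fun u₁ u₂ v₁ v₂ => f (min u₁ u₂) (min v₁ v₂)) D D E E := by
  simp only [incPowSum2, incPowSum4, ← Fintype.sum_prod_type']
  have hdiag : Function.Injective fun y : Fin D.n × Fin E.n => (y.1, y.1, y.2, y.2) :=
    fun y y' h => by
      simp only [Prod.mk.injEq] at h
      exact Prod.ext h.1 h.2.2.1
  refine le_of_eq_of_le (Finset.sum_congr rfl fun y _ => ?_)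
    (Fintype.sum_comp_le_sum_of_injective hdiag _)
  rw [inc4_min_diag f (D.pts_castSucc_le_pts_succ y.1) (E.pts_castSucc_le_pts_succ y.2)]

lemma exists_incPowSum4_min_le (hp : 0 < p) (f : ℝ → ℝ → ℝ) (D₁ D₂ : Grid s t)
    (D₃ D₄ : Grid σ τ) : ∃ (M : Grid s t) (M' : Grid σ τ),
      incPowSum4 p (fun u₁ u₂ v₁ v₂ => f (min u₁ u₂) (min v₁ v₂)) D₁ D₂ D₃ D₄ ≤
        incPowSum2 p f M M' := by
  obtain ⟨M, φ, hφ, hφpts⟩ := D₁.exists_common_refinement D₂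
  obtain ⟨M', φ', hφ', hφ'pts⟩ := D₃.exists_common_refinement D₄
  refine ⟨M, M', ?_⟩
  classical
  simp only [incPowSum2, incPowSum4, ← Fintype.sum_prod_type']
  refine Fintype.sum_le_sum_of_injective_on_subtype
    (fun x => D₁.Overlap D₂ (x.1, x.2.1) ∧ D₃.Overlap D₄ x.2.2) (fun x hx => ?_)
    (φ := fun x => (φ ⟨_, x.2.1⟩, φ' ⟨_, x.2.2⟩)) (fun x y hxy => ?_) (fun x => ?_)
  · rw [inc4_min_eq_zero f (D₁.pts_castSucc_le_pts_succ _) (D₂.pts_castSucc_le_pts_succ _)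
      (D₃.pts_castSucc_le_pts_succ _) (D₄.pts_castSucc_le_pts_succ _) hx, abs_zero,
      ENNReal.ofReal_zero, ENNReal.zero_rpow_of_pos hp]
  · have h₁₂ := hφ (congrArg Prod.fst hxy)
    have h₃₄ := hφ' (congrArg Prod.snd hxy)
    simp only [Subtype.mk.injEq, Prod.mk.injEq] at h₁₂ h₃₄
    exact Subtype.ext (Prod.ext h₁₂.1 (Prod.ext h₁₂.2 h₃₄))
  · obtain ⟨lo₁₂, hi₁₂⟩ := hφpts ⟨_, x.2.1⟩
    obtain ⟨lo₃₄, hi₃₄⟩ := hφ'pts ⟨_, x.2.2⟩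
    rw [lo₁₂, hi₁₂, lo₃₄, hi₃₄, inc4_min_of_lt f (D₁.pts_castSucc_le_pts_succ _)
      (D₂.pts_castSucc_le_pts_succ _) (D₃.pts_castSucc_le_pts_succ _)
      (D₄.pts_castSucc_le_pts_succ _) x.2.1 x.2.2]

end PowerSums

theorem V2_eq_V4_of_min_general
    (f : ℝ → ℝ → ℝ)
    (p : ℝ) (hp : 1 ≤ p)
    (s t σ τ : ℝ) :
    V2 p f s t σ τ =
      V4 p (fun u₁ u₂ v₁ v₂ => f (min u₁ u₂) (min v₁ v₂)) s t s t σ τ σ τ := by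
  have hp₀ : 0 < p := zero_lt_one.trans_le hp
  have hexp : 0 ≤ 1 / p := by positivity
  refine le_antisymm (iSup₂_le fun D E => ?_) (iSup₂_le fun D₁ D₂ => iSup₂_le fun D₃ D₄ => ?_)
  · exact le_iSup₂_of_le D D <| le_iSup₂_of_le E E <|
      ENNReal.rpow_le_rpow (incPowSum2_le_incPowSum4_min p f D E) hexp
  · obtain ⟨M, M', hle⟩ := exists_incPowSum4_min_le p hp₀ f D₁ D₂ D₃ D₄
    exact le_iSup₂_of_le M M' (ENNReal.rpow_le_rpow hle hexp)

/-- for continuous `f : [0,1]² → ℝ` and `f̄(u₁,u₂,v₁,v₂) = f(u₁∧u₂, v₁∧v₂)`,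
the 2D `p`-variation of `f` over `[s,t] × [σ,τ]` equals the 4D `p`-variation of `f̄` over
`[s,t]² × [σ,τ]²`, for any `s < t`, `σ < τ` and `p ≥ 1`. -/
theorem V2_eq_V4_of_min
    (f : ℝ → ℝ → ℝ)
    (hf : Continuous (fun q : ℝ × ℝ => f q.1 q.2))
    (p : ℝ) (hp : 1 ≤ p)
    (s t σ τ : ℝ) (hst : s < t) (hστ : σ < τ)
    (hs : 0 ≤ s) (ht : t ≤ 1) (hσ : 0 ≤ σ) (hτ : τ ≤ 1) :
    V2 p f s t σ τ =
      V4 p (fun u₁ u₂ v₁ v₂ => f (min u₁ u₂) (min v₁ v₂)) s t s t σ τ σ τ :=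
  V2_eq_V4_of_min_general f p hp s t σ τ

end
end

section
/- Let (X,Y): [0,1] → R² be a centred Gaussian process and f(u,v) = E[(X_u − Y_u) X_v]. Suppose the ρ-variation of the covariance R_{(X,Y)} of the joint process is controlled by a 2D control ω, ρ ≥ 1, and let γ > ρ. Then for s < t and any rectangle [σ,τ]×[σ',τ'] ⊂ [s,t]², one has V_γ(f, [σ,τ]×[σ',τ']) ≤ ε · ω([s,t]²)^{(1/ρ − 1/γ)/2} · ω([σ,τ]×[σ',τ'])^{1/γ}, where ε² = V_∞(R_{X−Y}, [s,t]²)^{1−ρ/γ}. -/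
/-!
Write `Z = X - Y` and `f(A) = E[(Z_b - Z_a)(X_d - X_c)]` for a rectangle `A = [a,b] × [c,d]`.
Split `|f(A)|^γ = |f(A)|^ρ · |f(A)|^(γ-ρ)`. The first factor is at most `ω(A)` by the control of
the covariance. By Cauchy–Schwarz, `|f(A)|² ≤ E[(Z_b - Z_a)²] · E[(X_d - X_c)²]`, where the first
factor is a diagonal increment of `R_Z`, hence at most `V_∞(R_Z, [s,t]²)`, and the second is at
most `ω([s,t]²)^(1/ρ)`. So `|f(A)|^γ ≤ C · ω(A)` with `C` independent of `A`, and summing over the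
cells of a grid, superadditivity of `ω` gives `V_γ(f, [σ,τ] × [σ',τ'])^γ ≤ C · ω([σ,τ] × [σ',τ'])`.
-/

open Set MeasureTheory ProbabilityTheory
open scoped ENNReal NNReal

noncomputable section

/-- `V_∞`: the supremum of absolute rectangular increments over sub-rectangles of
`[s,t] × [u,v]`. -/
def Vinf (f : ℝ → ℝ → ℝ) (s t u v : ℝ) : ℝ≥0∞ :=
  ⨆ (a ∈ Icc s t) (b ∈ Icc s t) (c ∈ Icc u v) (e ∈ Icc u v) (_ : a ≤ b) (_ : c ≤ e),
    ENNReal.ofReal |inc2 f a b c e|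

/-- A rectangle `[a,b] × [c,d]` is coded by the 4-tuple `(a,b,c,d)`. -/
abbrev Rect : Type := ℝ × ℝ × ℝ × ℝ

def Rect.set (r : Rect) : Set (ℝ × ℝ) := Icc r.1 r.2.1 ×ˢ Icc r.2.2.1 r.2.2.2

def Rect.proper (r : Rect) : Prop := r.1 ≤ r.2.1 ∧ r.2.2.1 ≤ r.2.2.2

def Rect.inc (f : ℝ → ℝ → ℝ) (r : Rect) : ℝ := inc2 f r.1 r.2.1 r.2.2.1 r.2.2.2

/-- `Π` is a partition of the rectangle `R` into finitely many essentially disjoint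
rectangles. -/
def IsRectPartition (prt : Finset Rect) (R : Rect) : Prop :=
  (∀ r ∈ prt, Rect.proper r) ∧ (⋃ r ∈ prt, Rect.set r) = Rect.set R ∧
    ∀ r ∈ prt, ∀ r' ∈ prt, r ≠ r' → interior (Rect.set r ∩ Rect.set r') = ∅

/-- A 2D control: continuous, nonnegative, vanishing on degenerate rectangles and
superadditive under partitions of rectangles in `[0,1]²` into essentially disjoint
rectangles. -/
def IsControl2 (ω : ℝ → ℝ → ℝ → ℝ → ℝ) : Prop :=
  Continuous (fun q : ℝ × ℝ × ℝ × ℝ => ω q.1 q.2.1 q.2.2.1 q.2.2.2) ∧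
  (∀ a b c d, 0 ≤ ω a b c d) ∧
  (∀ a c d, ω a a c d = 0) ∧ (∀ a b c, ω a b c c = 0) ∧
  (∀ R : Rect, Rect.proper R → Rect.set R ⊆ Icc (0:ℝ) 1 ×ˢ Icc (0:ℝ) 1 →
    ∀ prt : Finset Rect, IsRectPartition prt R →
      (∑ r ∈ prt, ω r.1 r.2.1 r.2.2.1 r.2.2.2) ≤ ω R.1 R.2.1 R.2.2.1 R.2.2.2)

/-- Controlled `p`-variation of `f` over the rectangle `R`: the supremum over all partitions
of `R` into essentially disjoint rectangles of `(Σ_{A∈Π} |f(A)|^p)^{1/p}`. -/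
def ctrlVar (p : ℝ) (f : ℝ → ℝ → ℝ) (R : Rect) : ℝ≥0∞ :=
  ⨆ (prt : Finset Rect) (_ : IsRectPartition prt R),
    (∑ r ∈ prt, (ENNReal.ofReal |Rect.inc f r|) ^ p) ^ (1 / p)

lemma Fin.exists_not_castSucc_and_succ {n : ℕ} {p : Fin (n + 1) → Prop} (h0 : ¬p 0)
    (hlast : p (Fin.last n)) : ∃ i : Fin n, ¬p i.castSucc ∧ p i.succ := by
  induction n with
  | zero => exact absurd hlast h0
  | succ n ih =>
    by_cases h : p (Fin.last n).castSucc
    · obtain ⟨i, hi⟩ := ih (p := fun k => p k.castSucc) h0 h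
      exact ⟨i.castSucc, hi⟩
    · exact ⟨Fin.last n, h, hlast⟩

namespace Grid

variable {s t : ℝ} (D : Grid s t)

lemma pts_mem_Icc_s11 (k : Fin (D.n + 1)) : D.pts k ∈ Icc s t :=
  ⟨D.first.ge.trans (D.mono (Fin.zero_le k)), (D.mono (Fin.le_last k)).trans D.last.le⟩

lemma pts_castSucc_le_succ (i : Fin D.n) : D.pts i.castSucc ≤ D.pts i.succ :=
  D.mono (Fin.castSucc_le_succ i)

lemma disjoint_Ioo {i j : Fin D.n} (hij : i ≠ j) :
    Disjoint (Ioo (D.pts i.castSucc) (D.pts i.succ)) (Ioo (D.pts j.castSucc) (D.pts j.succ)) := by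
  wlog h : i < j generalizing i j
  · exact (this hij.symm (lt_of_le_of_ne (not_lt.mp h) hij.symm)).symm
  exact Set.Ioo_disjoint_Ioo.mpr <|
    (min_le_left _ _).trans ((D.mono (Fin.succ_le_castSucc_iff.mpr h)).trans (le_max_right _ _))

lemma eq_of_pts_eq {i j : Fin D.n} (hi : D.pts i.castSucc < D.pts i.succ)
    (h₁ : D.pts i.castSucc = D.pts j.castSucc) (h₂ : D.pts i.succ = D.pts j.succ) : i = j := by
  by_contra hij
  have hdisj := D.disjoint_Ioo hij
  rw [← h₁, ← h₂, disjoint_self, bot_eq_empty, Ioo_eq_empty_iff] at hdisj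
  exact hdisj hi

lemma exists_mem_Icc_pts (hst : s < t) {x : ℝ} (hx : x ∈ Icc s t) :
    ∃ i : Fin D.n, D.pts i.castSucc < D.pts i.succ ∧ x ∈ Icc (D.pts i.castSucc) (D.pts i.succ) := by
  rcases hx.2.lt_or_eq with hxt | rfl
  · obtain ⟨i, h₁, h₂⟩ := Fin.exists_not_castSucc_and_succ (p := fun k => x < D.pts k)
      (by simpa [D.first] using hx.1) (by simpa [D.last] using hxt)
    rw [not_lt] at h₁
    exact ⟨i, h₁.trans_lt h₂, h₁, h₂.le⟩
  · obtain ⟨i, h₁, h₂⟩ := Fin.exists_not_castSucc_and_succ (p := fun k => x ≤ D.pts k)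
      (by simpa [D.first] using hst) (by simp [D.last])
    rw [not_le] at h₁
    exact ⟨i, h₁.trans_le h₂, h₁.le, h₂⟩

def withCell (a b : ℝ) (hsa : s ≤ a) (hab : a ≤ b) (hbt : b ≤ t) : Grid s t where
  n := 3
  pts := ![s, a, b, t]
  mono := by
    rw [Fin.monotone_iff_le_succ]
    intro i
    fin_cases i <;> assumption
  first := rfl
  last := rfl

end Grid

section Cells

variable {σ τ σ' τ' : ℝ} (D : Grid σ τ) (E : Grid σ' τ')

def gridRect (p : Fin D.n × Fin E.n) : Rect :=
  (D.pts p.1.castSucc, D.pts p.1.succ, E.pts p.2.castSucc, E.pts p.2.succ)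

/-- Only the non-degenerate cells are kept: on them `gridRect` is injective. -/
def gridCells : Finset Rect :=
  ((Finset.univ : Finset (Fin D.n × Fin E.n)).filter fun p =>
    D.pts p.1.castSucc < D.pts p.1.succ ∧ E.pts p.2.castSucc < E.pts p.2.succ).image
    (gridRect D E)

lemma isRectPartition_gridCells (hστ : σ < τ) (hστ' : σ' < τ') :
    IsRectPartition (gridCells D E) (σ, τ, σ', τ') := by
  simp only [IsRectPartition, gridCells, Finset.mem_image, Finset.mem_filter, Finset.mem_univ,
    true_and]
  refine ⟨?_, ?_, ?_⟩
  · rintro _ ⟨p, -, rfl⟩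
    exact ⟨D.pts_castSucc_le_succ _, E.pts_castSucc_le_succ _⟩
  · refine Subset.antisymm (iUnion₂_subset ?_) fun x hx => ?_
    · rintro _ ⟨p, -, rfl⟩
      exact prod_mono (Icc_subset_Icc (D.pts_mem_Icc_s11 _).1 (D.pts_mem_Icc_s11 _).2)
        (Icc_subset_Icc (E.pts_mem_Icc_s11 _).1 (E.pts_mem_Icc_s11 _).2)
    · obtain ⟨i, hi, hxi⟩ := D.exists_mem_Icc_pts hστ hx.1
      obtain ⟨j, hj, hxj⟩ := E.exists_mem_Icc_pts hστ' hx.2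
      exact mem_iUnion₂.mpr ⟨gridRect D E (i, j), ⟨(i, j), ⟨hi, hj⟩, rfl⟩, hxi, hxj⟩
  · rintro _ ⟨p, -, rfl⟩ _ ⟨q, -, rfl⟩ hpq
    have hpq' : p.1 ≠ q.1 ∨ p.2 ≠ q.2 := by
      by_contra! h
      exact hpq (congrArg _ (Prod.ext h.1 h.2))
    simp only [Rect.set, gridRect, interior_inter, interior_prod_eq, interior_Icc, prod_inter_prod]
    rcases hpq' with h | h
    · rw [(D.disjoint_Ioo h).inter_eq, empty_prod]
    · rw [(E.disjoint_Ioo h).inter_eq, prod_empty]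

lemma sum_gridRect_eq_sum_gridCells {ω : ℝ → ℝ → ℝ → ℝ → ℝ}
    (hω₁ : ∀ a c d, ω a a c d = 0) (hω₂ : ∀ a b c, ω a b c c = 0) :
    ∑ i : Fin D.n, ∑ j : Fin E.n,
        ω (D.pts i.castSucc) (D.pts i.succ) (E.pts j.castSucc) (E.pts j.succ)
      = ∑ r ∈ gridCells D E, ω r.1 r.2.1 r.2.2.1 r.2.2.2 := by
  rw [gridCells, Finset.sum_image, Finset.sum_filter_of_ne, ← Finset.sum_product',
    Finset.univ_product_univ]
  · rfl
  · rintro p - hp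
    simp only [gridRect] at hp
    by_contra hdeg
    rcases not_and_or.mp hdeg with h | h
    · rw [(D.pts_castSucc_le_succ _).antisymm (not_lt.mp h)] at hp
      exact hp (hω₁ _ _ _)
    · rw [(E.pts_castSucc_le_succ _).antisymm (not_lt.mp h)] at hp
      exact hp (hω₂ _ _ _)
  · simp only [Finset.coe_filter, Finset.mem_univ, true_and]
    rintro p hp q - hpq
    simp only [gridRect, Prod.mk.injEq] at hpq
    exact Prod.ext (D.eq_of_pts_eq hp.1 hpq.1 hpq.2.1) (E.eq_of_pts_eq hp.2 hpq.2.2.1 hpq.2.2.2)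

end Cells

namespace IsControl2

variable {ω : ℝ → ℝ → ℝ → ℝ → ℝ}

lemma sum_grid_le (hω : IsControl2 ω) {σ τ σ' τ' : ℝ}
    (hR : Icc σ τ ×ˢ Icc σ' τ' ⊆ Icc (0:ℝ) 1 ×ˢ Icc (0:ℝ) 1) (D : Grid σ τ) (E : Grid σ' τ') :
    ∑ i : Fin D.n, ∑ j : Fin E.n,
      ω (D.pts i.castSucc) (D.pts i.succ) (E.pts j.castSucc) (E.pts j.succ) ≤ ω σ τ σ' τ' := by
  rw [sum_gridRect_eq_sum_gridCells D E hω.2.2.1 hω.2.2.2.1]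
  by_cases h : σ < τ ∧ σ' < τ'
  · exact hω.2.2.2.2 (σ, τ, σ', τ') ⟨h.1.le, h.2.le⟩ hR _ (isRectPartition_gridCells D E h.1 h.2)
  · refine (Finset.sum_eq_zero fun r hr => absurd ?_ h).trans_le (hω.2.1 _ _ _ _)
    obtain ⟨p, hp, -⟩ := Finset.mem_image.mp hr
    obtain ⟨hp₁, hp₂⟩ := (Finset.mem_filter.mp hp).2
    exact ⟨(D.pts_mem_Icc_s11 _).1.trans_lt (hp₁.trans_le (D.pts_mem_Icc_s11 _).2),
      (E.pts_mem_Icc_s11 _).1.trans_lt (hp₂.trans_le (E.pts_mem_Icc_s11 _).2)⟩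

lemma le_of_subset (hω : IsControl2 ω) {s t u v a b c e : ℝ}
    (hR : Icc s t ×ˢ Icc u v ⊆ Icc (0:ℝ) 1 ×ˢ Icc (0:ℝ) 1)
    (hsa : s ≤ a) (hab : a ≤ b) (hbt : b ≤ t) (huc : u ≤ c) (hce : c ≤ e) (hev : e ≤ v) :
    ω a b c e ≤ ω s t u v := by
  let D := Grid.withCell a b hsa hab hbt
  let E := Grid.withCell c e huc hce hev
  have hnn : ∀ i : Fin 3, ∀ j : Fin 3,
      0 ≤ ω (D.pts i.castSucc) (D.pts i.succ) (E.pts j.castSucc) (E.pts j.succ) :=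
    fun _ _ => hω.2.1 _ _ _ _
  calc ω a b c e = ω (D.pts (1 : Fin 3).castSucc) (D.pts (1 : Fin 3).succ)
        (E.pts (1 : Fin 3).castSucc) (E.pts (1 : Fin 3).succ) := rfl
    _ ≤ ∑ j : Fin 3, ω (D.pts (1 : Fin 3).castSucc) (D.pts (1 : Fin 3).succ)
        (E.pts j.castSucc) (E.pts j.succ) :=
      Finset.single_le_sum (fun j _ => hnn 1 j) (Finset.mem_univ _)
    _ ≤ ∑ i : Fin 3, ∑ j : Fin 3,
        ω (D.pts i.castSucc) (D.pts i.succ) (E.pts j.castSucc) (E.pts j.succ) :=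
      Finset.single_le_sum (fun i _ => Finset.sum_nonneg fun j _ => hnn i j) (Finset.mem_univ _)
    _ ≤ ω s t u v := hω.sum_grid_le hR D E

end IsControl2

/-- The `ρ`-variation of `g` on `[s,t] × [u,v]` is controlled by `ω`, rectangle by rectangle. -/
def IsControlledBy (ρ : ℝ) (ω : ℝ → ℝ → ℝ → ℝ → ℝ) (g : ℝ → ℝ → ℝ) (s t u v : ℝ) : Prop :=
  ∀ a b c e, a ∈ Icc s t → b ∈ Icc s t → c ∈ Icc u v → e ∈ Icc u v → a ≤ b → c ≤ e →
    |inc2 g a b c e| ^ ρ ≤ ω a b c e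

lemma abs_inc2_le_of_Vinf_le {g : ℝ → ℝ → ℝ} {s t u v a b c e B : ℝ}
    (hB : 0 ≤ B) (h : Vinf g s t u v ≤ ENNReal.ofReal B) (ha : a ∈ Icc s t) (hb : b ∈ Icc s t)
    (hc : c ∈ Icc u v) (he : e ∈ Icc u v) (hab : a ≤ b) (hce : c ≤ e) :
    |inc2 g a b c e| ≤ B := by
  refine (ENNReal.ofReal_le_ofReal_iff hB).mp (le_trans ?_ h)
  exact le_iSup_of_le a <| le_iSup_of_le ha <| le_iSup_of_le b <| le_iSup_of_le hb <|
    le_iSup_of_le c <| le_iSup_of_le hc <| le_iSup_of_le e <| le_iSup_of_le he <|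
      le_iSup_of_le hab <| le_iSup_of_le hce le_rfl

namespace IsControlledBy

variable {ρ : ℝ} {ω : ℝ → ℝ → ℝ → ℝ → ℝ} {g : ℝ → ℝ → ℝ}

lemma Vinf_le {s t u v : ℝ} (h : IsControlledBy ρ ω g s t u v) (hω : IsControl2 ω)
    (hρ : 0 < ρ) (hR : Icc s t ×ˢ Icc u v ⊆ Icc (0:ℝ) 1 ×ˢ Icc (0:ℝ) 1) :
    Vinf g s t u v ≤ ENNReal.ofReal (ω s t u v ^ (1 / ρ)) := by
  simp only [Vinf, iSup_le_iff]
  intro a ha b hb c hc e he hab hce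
  refine ENNReal.ofReal_le_ofReal ?_
  rw [one_div, Real.le_rpow_inv_iff_of_pos (abs_nonneg _) (hω.2.1 _ _ _ _) hρ]
  exact (h a b c e ha hb hc he hab hce).trans
    (hω.le_of_subset hR ha.1 hab hb.2 hc.1 hce he.2)

lemma V2_le {σ τ σ' τ' p C : ℝ}
    (h : IsControlledBy p (fun a b c e => ω a b c e * C) g σ τ σ' τ') (hω : IsControl2 ω)
    (hp : 0 < p) (hC : 0 ≤ C) (hR : Icc σ τ ×ˢ Icc σ' τ' ⊆ Icc (0:ℝ) 1 ×ˢ Icc (0:ℝ) 1) :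
    V2 p g σ τ σ' τ' ≤ ENNReal.ofReal ((ω σ τ σ' τ' * C) ^ (1 / p)) := by
  refine iSup₂_le fun D E => ?_
  have hsum : ∑ i : Fin D.n, ∑ j : Fin E.n,
      ENNReal.ofReal |inc2 g (D.pts i.castSucc) (D.pts i.succ) (E.pts j.castSucc)
        (E.pts j.succ)| ^ p ≤ ENNReal.ofReal (ω σ τ σ' τ' * C) := by
    calc _ ≤ ∑ i : Fin D.n, ∑ j : Fin E.n, ENNReal.ofReal
          (ω (D.pts i.castSucc) (D.pts i.succ) (E.pts j.castSucc) (E.pts j.succ) * C) := by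
          gcongr with i _ j _
          rw [ENNReal.ofReal_rpow_of_nonneg (abs_nonneg _) hp.le]
          exact ENNReal.ofReal_le_ofReal <| h _ _ _ _ (D.pts_mem_Icc_s11 _) (D.pts_mem_Icc_s11 _)
            (E.pts_mem_Icc_s11 _) (E.pts_mem_Icc_s11 _) (D.pts_castSucc_le_succ i)
            (E.pts_castSucc_le_succ j)
      _ = ENNReal.ofReal ((∑ i : Fin D.n, ∑ j : Fin E.n,
          ω (D.pts i.castSucc) (D.pts i.succ) (E.pts j.castSucc) (E.pts j.succ)) * C) := by
          have hnn := hω.2.1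
          simp only [Finset.sum_mul]
          rw [ENNReal.ofReal_sum_of_nonneg fun i _ => Finset.sum_nonneg fun j _ =>
            mul_nonneg (hnn _ _ _ _) hC]
          simp only [ENNReal.ofReal_sum_of_nonneg fun j _ => mul_nonneg (hnn _ _ _ _) hC]
      _ ≤ ENNReal.ofReal (ω σ τ σ' τ' * C) := by
          gcongr
          exact hω.sum_grid_le hR D E
  calc _ ≤ ENNReal.ofReal (ω σ τ σ' τ' * C) ^ (1 / p) := by gcongr
    _ = _ := ENNReal.ofReal_rpow_of_nonneg (mul_nonneg (hω.2.1 _ _ _ _) hC) (by positivity)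

end IsControlledBy

lemma rpow_le_mul_rpow_sub {x w B ρ γ : ℝ} (hx : 0 ≤ x) (hγ : γ ≠ 0) (hργ : ρ ≤ γ)
    (hw : x ^ ρ ≤ w) (hB : x ≤ B) : x ^ γ ≤ w * B ^ (γ - ρ) :=
  calc x ^ γ = x ^ ρ * x ^ (γ - ρ) := by
        rw [← Real.rpow_add' hx (by rwa [add_sub_cancel]), add_sub_cancel]
    _ ≤ w * B ^ (γ - ρ) := mul_le_mul hw (Real.rpow_le_rpow hx hB (sub_nonneg.2 hργ))
        (Real.rpow_nonneg hx _) ((Real.rpow_nonneg hx _).trans hw)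

lemma mul_sqrt_mul_sqrt_rpow_eq {M W w ρ γ : ℝ} (hM : 0 ≤ M) (hW : 0 ≤ W) (hw : 0 ≤ w)
    (hρ : ρ ≠ 0) (hγ : γ ≠ 0) :
    (w * (√M * √(W ^ (1 / ρ))) ^ (γ - ρ)) ^ (1 / γ)
      = M ^ ((1 - ρ / γ) / 2) * W ^ ((1 / ρ - 1 / γ) / 2) * w ^ (1 / γ) := by
  have hW' : 0 ≤ W ^ (1 / ρ) := Real.rpow_nonneg hW _
  rw [Real.mul_rpow hw (by positivity), ← Real.rpow_mul (by positivity),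
    Real.mul_rpow (by positivity) (by positivity), Real.sqrt_eq_rpow, Real.sqrt_eq_rpow,
    ← Real.rpow_mul hM, ← Real.rpow_mul hW', ← Real.rpow_mul hW]
  have e₁ : 1 / 2 * ((γ - ρ) * (1 / γ)) = (1 - ρ / γ) / 2 := by field_simp
  have e₂ : 1 / ρ * ((1 - ρ / γ) / 2) = (1 / ρ - 1 / γ) / 2 := by field_simp
  rw [e₁, e₂]
  ring

section Moments

variable {Ω : Type*} [MeasurableSpace Ω] {P : Measure Ω}

lemma memLp_two_of_map_eq_gaussianReal {f : Ω → ℝ} {μ : ℝ} {v : ℝ≥0} (hf : AEMeasurable f P)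
    (h : P.map f = gaussianReal μ v) : MemLp f 2 P :=
  (memLp_map_measure_iff aestronglyMeasurable_id hf).mp (h ▸ memLp_id_gaussianReal 2)

lemma abs_integral_mul_le_sqrt_mul_sqrt {f g : Ω → ℝ} (hf : MemLp f 2 P) (hg : MemLp g 2 P) :
    |∫ x, f x * g x ∂P| ≤ √(∫ x, f x ^ 2 ∂P) * √(∫ x, g x ^ 2 ∂P) := by
  have hHolder := integral_mul_norm_le_Lp_mul_Lq (p := 2) (q := 2) .two_two
    (by simpa using hf) (by simpa using hg)
  simp only [Real.norm_eq_abs, Real.rpow_two, sq_abs, ← Real.sqrt_eq_rpow] at hHolder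
  calc |∫ x, f x * g x ∂P| ≤ ∫ x, |f x * g x| ∂P := abs_integral_le_integral_abs
    _ = ∫ x, |f x| * |g x| ∂P := by simp only [abs_mul]
    _ ≤ _ := hHolder

/-- `E[Z_u W_v]`: the covariance function `R` of the paper when `Z` and `W` are centred. -/
def covFun (P : Measure Ω) (Z W : ℝ → Ω → ℝ) (u v : ℝ) : ℝ := ∫ x, Z u x * W v x ∂P

variable {Z W : ℝ → Ω → ℝ} {a b c d : ℝ}

lemma inc2_covFun (ha : MemLp (Z a) 2 P) (hb : MemLp (Z b) 2 P) (hc : MemLp (W c) 2 P)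
    (hd : MemLp (W d) 2 P) :
    inc2 (covFun P Z W) a b c d = ∫ x, (Z b x - Z a x) * (W d x - W c x) ∂P := by
  have hint : ∀ {f g : Ω → ℝ}, MemLp f 2 P → MemLp g 2 P → Integrable (fun x => f x * g x) P :=
    fun hf hg => hf.integrable_mul hg
  simp only [sub_mul, mul_sub]
  rw [integral_sub, integral_sub, integral_sub]
  · simp only [inc2, covFun]
    ring
  exacts [hint hb hc, hint ha hc, hint hb hd, hint ha hd, (hint hb hd).sub (hint ha hd),
    (hint hb hc).sub (hint ha hc)]

lemma abs_inc2_covFun_le (ha : MemLp (Z a) 2 P) (hb : MemLp (Z b) 2 P) (hc : MemLp (W c) 2 P)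
    (hd : MemLp (W d) 2 P) :
    |inc2 (covFun P Z W) a b c d|
      ≤ √(inc2 (covFun P Z Z) a b a b) * √(inc2 (covFun P W W) c d c d) := by
  rw [inc2_covFun ha hb hc hd, inc2_covFun ha hb ha hb, inc2_covFun hc hd hc hd]
  simpa only [sq, Pi.sub_apply] using abs_integral_mul_le_sqrt_mul_sqrt (hb.sub ha) (hd.sub hc)

theorem V2_covFun_le {Z W : ℝ → Ω → ℝ} {ω : ℝ → ℝ → ℝ → ℝ → ℝ} (hω : IsControl2 ω)
    {ρ γ : ℝ} (hρ : 0 < ρ) (hργ : ρ ≤ γ) {s t : ℝ} (hs : 0 ≤ s) (ht : t ≤ 1)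
    (hZ : ∀ u ∈ Icc s t, MemLp (Z u) 2 P) (hW : ∀ u ∈ Icc s t, MemLp (W u) 2 P)
    (hZW : IsControlledBy ρ ω (covFun P Z W) s t s t)
    (hZZ : IsControlledBy ρ ω (covFun P Z Z) s t s t)
    (hWW : IsControlledBy ρ ω (covFun P W W) s t s t)
    {σ τ σ' τ' : ℝ} (hστ : Icc σ τ ⊆ Icc s t) (hστ' : Icc σ' τ' ⊆ Icc s t) :
    V2 γ (covFun P Z W) σ τ σ' τ'
      ≤ Vinf (covFun P Z Z) s t s t ^ ((1 - ρ / γ) / 2)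
        * ENNReal.ofReal (ω s t s t ^ ((1 / ρ - 1 / γ) / 2))
        * ENNReal.ofReal (ω σ τ σ' τ' ^ (1 / γ)) := by
  have hγ : 0 < γ := hρ.trans_le hργ
  have hI : Icc s t ⊆ Icc (0:ℝ) 1 := Icc_subset_Icc hs ht
  have hωst : 0 ≤ ω s t s t ^ (1 / ρ) := Real.rpow_nonneg (hω.2.1 _ _ _ _) _
  have hVZ := hZZ.Vinf_le hω hρ (prod_mono hI hI)
  have hVW := hWW.Vinf_le hω hρ (prod_mono hI hI)
  set M := (Vinf (covFun P Z Z) s t s t).toReal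
  have hM : Vinf (covFun P Z Z) s t s t = ENNReal.ofReal M :=
    (ENNReal.ofReal_toReal (ne_top_of_le_ne_top ENNReal.ofReal_ne_top hVZ)).symm
  have hcell : IsControlledBy γ
      (fun a b c d => ω a b c d * (√M * √(ω s t s t ^ (1 / ρ))) ^ (γ - ρ))
      (covFun P Z W) σ τ σ' τ' := by
    intro a b c d ha hb hc hd hab hcd
    refine rpow_le_mul_rpow_sub (abs_nonneg _) hγ.ne' hργ
      (hZW a b c d (hστ ha) (hστ hb) (hστ' hc) (hστ' hd) hab hcd) ?_
    refine (abs_inc2_covFun_le (hZ a (hστ ha)) (hZ b (hστ hb)) (hW c (hστ' hc))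
      (hW d (hστ' hd))).trans (mul_le_mul ?_ ?_ (Real.sqrt_nonneg _) (Real.sqrt_nonneg _))
    · exact Real.sqrt_le_sqrt <| (le_abs_self _).trans <| abs_inc2_le_of_Vinf_le
        ENNReal.toReal_nonneg hM.le (hστ ha) (hστ hb) (hστ ha) (hστ hb) hab hab
    · exact Real.sqrt_le_sqrt <| (le_abs_self _).trans <| abs_inc2_le_of_Vinf_le hωst hVW
        (hστ' hc) (hστ' hd) (hστ' hc) (hστ' hd) hcd hcd
  refine (hcell.V2_le hω hγ (by positivity)
    (prod_mono (hστ.trans hI) (hστ'.trans hI))).trans_eq ?_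
  have hMe : 0 ≤ M ^ ((1 - ρ / γ) / 2) := Real.rpow_nonneg ENNReal.toReal_nonneg _
  have he : 0 ≤ (1 - ρ / γ) / 2 := by
    have : ρ / γ ≤ 1 := (div_le_one hγ).mpr hργ
    linarith
  rw [hM, ENNReal.ofReal_rpow_of_nonneg ENNReal.toReal_nonneg he, ← ENNReal.ofReal_mul hMe,
    ← ENNReal.ofReal_mul (mul_nonneg hMe (Real.rpow_nonneg (hω.2.1 _ _ _ _) _)),
    mul_sqrt_mul_sqrt_rpow_eq ENNReal.toReal_nonneg (hω.2.1 _ _ _ _) (hω.2.1 _ _ _ _) hρ.ne' hγ.ne']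

end Moments

theorem half_estimate_gaussian_general
    {Ω : Type*} [MeasurableSpace Ω] (P : Measure Ω)
    (X Y : ℝ → Ω → ℝ)
    (hXm : ∀ u, Measurable (X u)) (hYm : ∀ u, Measurable (Y u))
    -- `(X,Y)` is a centred Gaussian process: all finite linear combinations of values of
    -- `X` and `Y` at times in `[0,1]` are centred Gaussians
    (hgauss : ∀ (m : ℕ) (idx : Fin m → Bool × ℝ) (c : Fin m → ℝ),
      (∀ i, (idx i).2 ∈ Icc (0:ℝ) 1) →
      ∃ v : ℝ≥0,
        Measure.map
          (fun ω' => ∑ i, c i * (if (idx i).1 then X (idx i).2 ω' else Y (idx i).2 ω')) P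
          = gaussianReal 0 v)
    (ρ γ : ℝ) (hρ : 1 ≤ ρ) (hργ : ρ < γ)
    (ω : ℝ → ℝ → ℝ → ℝ → ℝ) (hω : IsControl2 ω)
    -- the `ρ`-variation of the joint covariance `R_{(X,Y)}` is controlled by `ω`: all
    -- rectangular covariance increments of pairs from `{X, Y, X−Y}` are dominated
    (hcov : ∀ Z W : ℝ → Ω → ℝ,
      (Z = X ∨ Z = Y ∨ Z = fun u ω' => X u ω' - Y u ω') →
      (W = X ∨ W = Y ∨ W = fun u ω' => X u ω' - Y u ω') →
      ∀ a b c d : ℝ, a ∈ Icc (0:ℝ) 1 → b ∈ Icc (0:ℝ) 1 → c ∈ Icc (0:ℝ) 1 →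
        d ∈ Icc (0:ℝ) 1 → a ≤ b → c ≤ d →
        |∫ ω', (Z b ω' - Z a ω') * (W d ω' - W c ω') ∂P| ^ ρ ≤ ω a b c d)
    (s t : ℝ) (hs : 0 ≤ s) (ht : t ≤ 1)
    (σ τ σ' τ' : ℝ) (h1 : σ ∈ Icc s t) (h2 : τ ∈ Icc s t) (h3 : σ' ∈ Icc s t)
    (h4 : τ' ∈ Icc s t) :
    V2 γ (fun u v => ∫ ω', (X u ω' - Y u ω') * X v ω' ∂P) σ τ σ' τ'
      ≤ (Vinf (fun u v => ∫ ω', (X u ω' - Y u ω') * (X v ω' - Y v ω') ∂P) s t s t)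
          ^ ((1 - ρ / γ) / 2)
        * ENNReal.ofReal ((ω s t s t) ^ ((1 / ρ - 1 / γ) / 2))
        * ENNReal.ofReal ((ω σ τ σ' τ') ^ (1 / γ)) := by
  have hI : Icc s t ⊆ Icc (0:ℝ) 1 := Icc_subset_Icc hs ht
  have hL2 : ∀ u ∈ Icc (0:ℝ) 1, MemLp (X u) 2 P ∧ MemLp (Y u) 2 P := fun u hu => by
    obtain ⟨v, hv⟩ := hgauss 1 (fun _ => (true, u)) (fun _ => 1) (fun _ => hu)
    obtain ⟨v', hv'⟩ := hgauss 1 (fun _ => (false, u)) (fun _ => 1) (fun _ => hu)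
    simp only [Fin.sum_univ_one, one_mul, if_true, Bool.false_eq_true, if_false] at hv hv'
    exact ⟨memLp_two_of_map_eq_gaussianReal (hXm u).aemeasurable hv,
      memLp_two_of_map_eq_gaussianReal (hYm u).aemeasurable hv'⟩
  have hL2' : ∀ V : ℝ → Ω → ℝ, (V = X ∨ V = Y ∨ V = fun u ω' => X u ω' - Y u ω') →
      ∀ u ∈ Icc s t, MemLp (V u) 2 P := by
    rintro V (rfl | rfl | rfl) u hu
    exacts [(hL2 u (hI hu)).1, (hL2 u (hI hu)).2, (hL2 u (hI hu)).1.sub (hL2 u (hI hu)).2]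
  have hctrl : ∀ Z W : ℝ → Ω → ℝ, (Z = X ∨ Z = Y ∨ Z = fun u ω' => X u ω' - Y u ω') →
      (W = X ∨ W = Y ∨ W = fun u ω' => X u ω' - Y u ω') →
      IsControlledBy ρ ω (covFun P Z W) s t s t := by
    intro Z W hZ hW a b c d ha hb hc hd hab hcd
    rw [inc2_covFun (hL2' Z hZ a ha) (hL2' Z hZ b hb) (hL2' W hW c hc) (hL2' W hW d hd)]
    exact hcov Z W hZ hW a b c d (hI ha) (hI hb) (hI hc) (hI hd) hab hcd
  exact V2_covFun_le (Z := fun u ω' => X u ω' - Y u ω') (W := X) hω (by linarith) hργ.le hs ht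
    (hL2' _ (.inr (.inr rfl))) (hL2' _ (.inl rfl))
    (hctrl _ _ (.inr (.inr rfl)) (.inl rfl)) (hctrl _ _ (.inr (.inr rfl)) (.inr (.inr rfl)))
    (hctrl _ _ (.inl rfl) (.inl rfl)) (Icc_subset_Icc h1.1 h2.2) (Icc_subset_Icc h3.1 h4.2)

/-- let `(X,Y)` be a centred Gaussian process in `ℝ²` whose joint covariance
has `ρ`-variation controlled by a 2D control `ω`, `ρ ≥ 1`, `γ > ρ`, and let
`f(u,v) = E[(X_u − Y_u) X_v]`. Then for `s < t` and any rectangle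
`[σ,τ]×[σ',τ'] ⊆ [s,t]²`:
`V_γ(f,[σ,τ]×[σ',τ']) ≤ ε · ω([s,t]²)^{(1/ρ−1/γ)/2} · ω([σ,τ]×[σ',τ'])^{1/γ}`
where `ε² = V_∞(R_{X−Y},[s,t]²)^{1−ρ/γ}`. -/
theorem half_estimate_gaussian
    {Ω : Type*} [MeasurableSpace Ω] (P : Measure Ω) [IsProbabilityMeasure P]
    (X Y : ℝ → Ω → ℝ)
    (hXm : ∀ u, Measurable (X u)) (hYm : ∀ u, Measurable (Y u))
    -- `(X,Y)` is a centred Gaussian process: all finite linear combinations of values of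
    -- `X` and `Y` at times in `[0,1]` are centred Gaussians
    (hgauss : ∀ (m : ℕ) (idx : Fin m → Bool × ℝ) (c : Fin m → ℝ),
      (∀ i, (idx i).2 ∈ Icc (0:ℝ) 1) →
      ∃ v : ℝ≥0,
        Measure.map
          (fun ω' => ∑ i, c i * (if (idx i).1 then X (idx i).2 ω' else Y (idx i).2 ω')) P
          = gaussianReal 0 v)
    (ρ γ : ℝ) (hρ : 1 ≤ ρ) (hργ : ρ < γ)
    (ω : ℝ → ℝ → ℝ → ℝ → ℝ) (hω : IsControl2 ω)
    -- the `ρ`-variation of the joint covariance `R_{(X,Y)}` is controlled by `ω`: all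
    -- rectangular covariance increments of pairs from `{X, Y, X−Y}` are dominated
    (hcov : ∀ Z W : ℝ → Ω → ℝ,
      (Z = X ∨ Z = Y ∨ Z = fun u ω' => X u ω' - Y u ω') →
      (W = X ∨ W = Y ∨ W = fun u ω' => X u ω' - Y u ω') →
      ∀ a b c d : ℝ, a ∈ Icc (0:ℝ) 1 → b ∈ Icc (0:ℝ) 1 → c ∈ Icc (0:ℝ) 1 →
        d ∈ Icc (0:ℝ) 1 → a ≤ b → c ≤ d →
        |∫ ω', (Z b ω' - Z a ω') * (W d ω' - W c ω') ∂P| ^ ρ ≤ ω a b c d)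
    (s t : ℝ) (hs : 0 ≤ s) (hst : s < t) (ht : t ≤ 1)
    (σ τ σ' τ' : ℝ) (h1 : σ ∈ Icc s t) (h2 : τ ∈ Icc s t) (h3 : σ' ∈ Icc s t)
    (h4 : τ' ∈ Icc s t) (hστ : σ ≤ τ) (hστ' : σ' ≤ τ') :
    V2 γ (fun u v => ∫ ω', (X u ω' - Y u ω') * X v ω' ∂P) σ τ σ' τ'
      ≤ (Vinf (fun u v => ∫ ω', (X u ω' - Y u ω') * (X v ω' - Y v ω') ∂P) s t s t)
          ^ ((1 - ρ / γ) / 2)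
        * ENNReal.ofReal ((ω s t s t) ^ ((1 / ρ - 1 / γ) / 2))
        * ENNReal.ofReal ((ω σ τ σ' τ') ^ (1 / γ)) :=
  half_estimate_gaussian_general P X Y hXm hYm hgauss ρ γ hρ hργ ω hω hcov s t hs ht σ τ σ' τ' h1 h2
    h3 h4

end
end

section
/- Let (X,Y): [0,1] → R² be a centred Gaussian process with bounded variation paths, whose covariance R_{(X,Y)} has ρ-variation controlled by a 2D control ω, ρ < 2, and let γ > ρ. Define X^{(n)}_{s,t} = (X_{s,t})ⁿ/n! and similarly Y^{(n)}. Then for every n there is C(n) such that |X^{(n)}_{s,t} − Y^{(n)}_{s,t}|_{L²} ≤ C(n) ε ω([s,t]²)^{1/(2γ)} ω([s,t]²)^{(n−1)/(2ρ)} for all s < t, where ε² = V_∞(R_{X−Y},[s,t]²)^{1−ρ/γ}. -/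
open Set MeasureTheory ProbabilityTheory
open scoped ENNReal NNReal

noncomputable section

/-! Put `a = X_{s,t}`, `b = Y_{s,t}` and `r = ω([s,t]²)^{1/ρ}`, which bounds the variances of `a`,
`b` and `a - b`. Factorising `aⁿ - bⁿ = (a - b) · ∑ aⁱ bⁿ⁻¹⁻ⁱ` and applying Cauchy–Schwarz bounds
`E[(aⁿ - bⁿ)²]` by `(E[(a - b)⁴] E[(∑ aⁱ bⁿ⁻¹⁻ⁱ)⁴])^{1/2}`. Because `a`, `b`, `a - b` are centred
Gaussians, each higher moment is a fixed multiple of a power of the variance, which gives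
`‖aⁿ - bⁿ‖₂ ≲ ‖a - b‖₂ r^{(n-1)/2}`. Finally `D = ‖a - b‖₂²` is the rectangular increment of
`R_{X-Y}` over `[s,t]²`, so `D ≤ V_∞`, while also `D ≤ r`; splitting
`√D = D^{(1-ρ/γ)/2} D^{ρ/(2γ)}` yields the factor `ε ω([s,t]²)^{1/(2γ)}`. -/

lemma abs_geom_sum₂_le (x y : ℝ) (n : ℕ) :
    |∑ i ∈ Finset.range n, x ^ i * y ^ (n - 1 - i)| ≤ n * max |x| |y| ^ (n - 1) := by
  calc |∑ i ∈ Finset.range n, x ^ i * y ^ (n - 1 - i)|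
      ≤ ∑ i ∈ Finset.range n, |x| ^ i * |y| ^ (n - 1 - i) := by
        simpa only [abs_mul, abs_pow] using
          Finset.abs_sum_le_sum_abs (fun i ↦ x ^ i * y ^ (n - 1 - i)) (Finset.range n)
    _ ≤ ∑ i ∈ Finset.range n, max |x| |y| ^ (n - 1) := by
        refine Finset.sum_le_sum fun i hi ↦ ?_
        have hi : i + (n - 1 - i) = n - 1 := by grind
        calc |x| ^ i * |y| ^ (n - 1 - i) ≤ max |x| |y| ^ i * max |x| |y| ^ (n - 1 - i) := by
              gcongr
              exacts [le_max_left _ _, le_max_right _ _]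
          _ = max |x| |y| ^ (n - 1) := by rw [← pow_add, hi]
    _ = n * max |x| |y| ^ (n - 1) := by simp

lemma geom_sum₂_pow_four_le (x y : ℝ) (n : ℕ) :
    (∑ i ∈ Finset.range n, x ^ i * y ^ (n - 1 - i)) ^ 4
      ≤ (n : ℝ) ^ 4 * (x ^ (4 * (n - 1)) + y ^ (4 * (n - 1))) := by
  have hmax : max |x| |y| ^ (4 * (n - 1)) ≤ x ^ (4 * (n - 1)) + y ^ (4 * (n - 1)) := by
    have hx : 0 ≤ x ^ (4 * (n - 1)) := (Even.mul_right (by decide) _).pow_nonneg x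
    have hy : 0 ≤ y ^ (4 * (n - 1)) := (Even.mul_right (by decide) _).pow_nonneg y
    rcases max_choice |x| |y| with h | h <;>
      rw [h, pow_abs, abs_of_nonneg (by assumption)] <;> linarith
  calc (∑ i ∈ Finset.range n, x ^ i * y ^ (n - 1 - i)) ^ 4
      = |∑ i ∈ Finset.range n, x ^ i * y ^ (n - 1 - i)| ^ 4 := (Even.pow_abs (by decide) _).symm
    _ ≤ (n * max |x| |y| ^ (n - 1)) ^ 4 := by gcongr; exact abs_geom_sum₂_le x y n
    _ = (n : ℝ) ^ 4 * max |x| |y| ^ (4 * (n - 1)) := by ring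
    _ ≤ (n : ℝ) ^ 4 * (x ^ (4 * (n - 1)) + y ^ (4 * (n - 1))) := by gcongr

lemma le_rpow_inv_of_abs_rpow_le {x w ρ : ℝ} (hρ : 0 < ρ) (h : |x| ^ ρ ≤ w) : x ≤ w ^ ρ⁻¹ :=
  (le_abs_self x).trans <| (Real.le_rpow_inv_iff_of_pos (abs_nonneg x)
    ((Real.rpow_nonneg (abs_nonneg x) ρ).trans h) hρ).2 h

lemma sqrt_le_rpow_mul_rpow_of_le_rpow_inv {D w ρ γ : ℝ} (hD : 0 ≤ D) (hw : 0 ≤ w)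
    (hDw : D ≤ w ^ ρ⁻¹) (hρ : 0 < ρ) (hργ : ρ ≤ γ) :
    √D ≤ D ^ ((1 - ρ / γ) / 2) * w ^ (1 / (2 * γ)) := by
  have hγ : 0 < γ := hρ.trans_le hργ
  have hexp : (1 - ρ / γ) / 2 + ρ / (2 * γ) = 1 / 2 := by
    field_simp
    ring
  calc √D = D ^ ((1 - ρ / γ) / 2) * D ^ (ρ / (2 * γ)) := by
        rw [Real.sqrt_eq_rpow, ← hexp, Real.rpow_add' hD (by rw [hexp]; norm_num)]
    _ ≤ D ^ ((1 - ρ / γ) / 2) * (w ^ ρ⁻¹) ^ (ρ / (2 * γ)) := by gcongr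
    _ = D ^ ((1 - ρ / γ) / 2) * w ^ (1 / (2 * γ)) := by
        rw [← Real.rpow_mul hw]
        congr 2
        field_simp

section LTwo

variable {α : Type*} [MeasurableSpace α] {μ : Measure α}

lemma integral_mul_le_sqrt_mul_sqrt {f g : α → ℝ} (hf0 : 0 ≤ f) (hg0 : 0 ≤ g)
    (hf : MemLp f 2 μ) (hg : MemLp g 2 μ) :
    ∫ x, f x * g x ∂μ ≤ √(∫ x, f x ^ 2 ∂μ) * √(∫ x, g x ^ 2 ∂μ) := by
  have h := integral_mul_le_Lp_mul_Lq_of_nonneg Real.HolderConjugate.two_two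
    (ae_of_all _ hf0) (ae_of_all _ hg0) (by simpa using hf) (by simpa using hg)
  simpa only [Real.rpow_two, Real.sqrt_eq_rpow, one_div] using h

lemma eLpNorm_two_eq_sqrt_integral_sq {g : α → ℝ} (hg : MemLp g 2 μ) :
    eLpNorm g 2 μ = ENNReal.ofReal √(∫ x, g x ^ 2 ∂μ) := by
  rw [hg.eLpNorm_eq_integral_rpow_norm two_ne_zero ENNReal.ofNat_ne_top, Real.sqrt_eq_rpow]
  simp

end LTwo

def gaussianEvenMoment (k : ℕ) : ℝ := ∫ x, x ^ (2 * k) ∂gaussianReal 0 1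

lemma gaussianEvenMoment_nonneg (k : ℕ) : 0 ≤ gaussianEvenMoment k :=
  integral_nonneg fun x ↦ (even_two_mul k).pow_nonneg x

lemma gaussianEvenMoment_one : gaussianEvenMoment 1 = 1 := by
  have h := variance_of_integral_eq_zero (μ := gaussianReal 0 1) aemeasurable_id
    integral_id_gaussianReal
  rw [variance_id_gaussianReal] at h
  simpa [gaussianEvenMoment] using h.symm

lemma gaussianReal_zero_eq_map_mul (v : ℝ≥0) :
    gaussianReal 0 v = (gaussianReal 0 1).map (fun x ↦ √v * x) := by
  rw [gaussianReal_map_const_mul]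
  congr 1
  · simp
  · ext; simp

section GaussianMoments

variable {Ω : Type*} [MeasurableSpace Ω] {P : Measure Ω} {f : Ω → ℝ} {v : ℝ≥0}

lemma integrable_pow_of_hasLaw_gaussianReal {μ : ℝ} (hf : HasLaw f (gaussianReal μ v) P)
    (k : ℕ) : Integrable (fun ω ↦ f ω ^ k) P := by
  have := hf.isProbabilityMeasure
  have hk := (hf.hasGaussianLaw.memLp (ENNReal.natCast_ne_top k)).integrable_norm_pow'
  refine (integrable_norm_iff ?_).mp (by simpa only [norm_pow] using hk)
  exact (hf.aemeasurable.pow_const k).aestronglyMeasurable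

lemma integral_pow_two_mul_of_hasLaw_gaussianReal (hf : HasLaw f (gaussianReal 0 v) P) (k : ℕ) :
    ∫ ω, f ω ^ (2 * k) ∂P = gaussianEvenMoment k * v ^ k := by
  have h := hf.integral_comp (f := fun x : ℝ ↦ x ^ (2 * k)) (by fun_prop)
  simp only [Function.comp_def] at h
  rw [h, gaussianReal_zero_eq_map_mul, integral_map (by fun_prop) (by fun_prop)]
  simp_rw [mul_pow, pow_mul, Real.sq_sqrt v.coe_nonneg]
  rw [integral_const_mul, gaussianEvenMoment, mul_comm]
  simp_rw [pow_mul]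

lemma integral_mul_self_of_hasLaw_gaussianReal (hf : HasLaw f (gaussianReal 0 v) P) :
    ∫ ω, f ω * f ω ∂P = v := by
  simpa [← sq, gaussianEvenMoment_one] using integral_pow_two_mul_of_hasLaw_gaussianReal hf 1

end GaussianMoments

def gaussianPowDiffConst (n : ℕ) : ℝ :=
  n ^ 2 * √(2 * gaussianEvenMoment 2 * gaussianEvenMoment (2 * (n - 1)))

section PowDiff

variable {Ω : Type*} [MeasurableSpace Ω] {P : Measure Ω} {a b : Ω → ℝ} {va vb vd : ℝ≥0}

lemma integrable_and_integral_geom_sum₂_pow_four_le {r : ℝ}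
    (ha : HasLaw a (gaussianReal 0 va) P) (hb : HasLaw b (gaussianReal 0 vb) P)
    (hva : va ≤ r) (hvb : vb ≤ r) (n : ℕ) :
    Integrable (fun ω ↦ (∑ i ∈ Finset.range n, a ω ^ i * b ω ^ (n - 1 - i)) ^ 4) P ∧
      ∫ ω, (∑ i ∈ Finset.range n, a ω ^ i * b ω ^ (n - 1 - i)) ^ 4 ∂P
        ≤ 2 * n ^ 4 * gaussianEvenMoment (2 * (n - 1)) * r ^ (2 * (n - 1)) := by
  have hbound := fun ω ↦ geom_sum₂_pow_four_le (a ω) (b ω) n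
  simp only [show 4 * (n - 1) = 2 * (2 * (n - 1)) by ring] at hbound
  have ha' := integrable_pow_of_hasLaw_gaussianReal ha (2 * (2 * (n - 1)))
  have hb' := integrable_pow_of_hasLaw_gaussianReal hb (2 * (2 * (n - 1)))
  have hint := (ha'.add hb').const_mul ((n : ℝ) ^ 4)
  have hS : Integrable (fun ω ↦ (∑ i ∈ Finset.range n, a ω ^ i * b ω ^ (n - 1 - i)) ^ 4) P := by
    refine hint.mono' ?_ (ae_of_all _ fun ω ↦ ?_)
    · have := ha.aemeasurable
      have := hb.aemeasurable
      fun_prop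
    · rw [Real.norm_of_nonneg (Even.pow_nonneg (by decide) _)]
      exact hbound ω
  refine ⟨hS, (integral_mono hS hint hbound).trans ?_⟩
  rw [integral_const_mul, integral_add' ha' hb', integral_pow_two_mul_of_hasLaw_gaussianReal ha,
    integral_pow_two_mul_of_hasLaw_gaussianReal hb]
  have := gaussianEvenMoment_nonneg (2 * (n - 1))
  calc _ ≤ (n : ℝ) ^ 4 * (gaussianEvenMoment (2 * (n - 1)) * r ^ (2 * (n - 1))
        + gaussianEvenMoment (2 * (n - 1)) * r ^ (2 * (n - 1))) := by gcongr
    _ = _ := by ring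

lemma integrable_and_integral_sq_pow_sub_pow_le {r : ℝ}
    (ha : HasLaw a (gaussianReal 0 va) P) (hb : HasLaw b (gaussianReal 0 vb) P)
    (hd : HasLaw (a - b) (gaussianReal 0 vd) P) (hva : va ≤ r) (hvb : vb ≤ r) (n : ℕ) :
    Integrable (fun ω ↦ (a ω ^ n - b ω ^ n) ^ 2) P ∧
      ∫ ω, (a ω ^ n - b ω ^ n) ^ 2 ∂P ≤ gaussianPowDiffConst n * vd * r ^ (n - 1) := by
  set S : Ω → ℝ := fun ω ↦ ∑ i ∈ Finset.range n, a ω ^ i * b ω ^ (n - 1 - i)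
  obtain ⟨hS4, hS4le⟩ := integrable_and_integral_geom_sum₂_pow_four_le ha hb hva hvb n
  have hfac : (fun ω ↦ (a ω ^ n - b ω ^ n) ^ 2) = fun ω ↦ (a - b) ω ^ 2 * S ω ^ 2 := by
    ext ω
    rw [← geom_sum₂_mul, Pi.sub_apply]
    ring
  have hd2 : MemLp (fun ω ↦ (a - b) ω ^ 2) 2 P := by
    refine (memLp_two_iff_integrable_sq (hd.aemeasurable.pow_const 2).aestronglyMeasurable).2 ?_
    simpa only [← pow_mul] using integrable_pow_of_hasLaw_gaussianReal hd (2 * 2)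
  have hS2 : MemLp (fun ω ↦ S ω ^ 2) 2 P := by
    refine (memLp_two_iff_integrable_sq ?_).2 (by simpa only [← pow_mul] using hS4)
    have := ha.aemeasurable
    have := hb.aemeasurable
    fun_prop
  rw [hfac]
  refine ⟨hd2.integrable_mul hS2, ?_⟩
  have hr : 0 ≤ r := va.coe_nonneg.trans hva
  have hκ₂ := gaussianEvenMoment_nonneg 2
  have hκ := gaussianEvenMoment_nonneg (2 * (n - 1))
  calc ∫ ω, (a - b) ω ^ 2 * S ω ^ 2 ∂P
      ≤ √(∫ ω, ((a - b) ω ^ 2) ^ 2 ∂P) * √(∫ ω, (S ω ^ 2) ^ 2 ∂P) :=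
        integral_mul_le_sqrt_mul_sqrt (fun _ ↦ sq_nonneg _) (fun _ ↦ sq_nonneg _) hd2 hS2
    _ ≤ √(gaussianEvenMoment 2 * vd ^ 2) *
          √(2 * n ^ 4 * gaussianEvenMoment (2 * (n - 1)) * r ^ (2 * (n - 1))) := by
        simp only [← pow_mul]
        rw [integral_pow_two_mul_of_hasLaw_gaussianReal hd 2]
        gcongr
    _ = gaussianPowDiffConst n * vd * r ^ (n - 1) := by
        rw [← Real.sqrt_mul (by positivity), gaussianPowDiffConst,
          show gaussianEvenMoment 2 * vd ^ 2 *
              (2 * n ^ 4 * gaussianEvenMoment (2 * (n - 1)) * r ^ (2 * (n - 1)))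
            = 2 * gaussianEvenMoment 2 * gaussianEvenMoment (2 * (n - 1)) *
              (n ^ 2 * vd * r ^ (n - 1)) ^ 2 by ring,
          Real.sqrt_mul (by positivity), Real.sqrt_sq (by positivity)]
        ring

lemma eLpNorm_pow_sub_pow_le {r : ℝ} (ha : HasLaw a (gaussianReal 0 va) P)
    (hb : HasLaw b (gaussianReal 0 vb) P) (hd : HasLaw (a - b) (gaussianReal 0 vd) P)
    (hva : va ≤ r) (hvb : vb ≤ r) (n : ℕ) :
    eLpNorm (fun ω ↦ a ω ^ n - b ω ^ n) 2 P
      ≤ ENNReal.ofReal (√(gaussianPowDiffConst n) * √vd * √r ^ (n - 1)) := by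
  obtain ⟨hint, hle⟩ := integrable_and_integral_sq_pow_sub_pow_le ha hb hd hva hvb n
  have hmeas : AEStronglyMeasurable (fun ω ↦ a ω ^ n - b ω ^ n) P := by
    have := ha.aemeasurable
    have := hb.aemeasurable
    fun_prop
  have hr : 0 ≤ r := va.coe_nonneg.trans hva
  have hsqrt : √(r ^ (n - 1)) = √r ^ (n - 1) := by
    rw [← Real.sqrt_sq (by positivity : 0 ≤ √r ^ (n - 1)), ← pow_mul, mul_comm, pow_mul,
      Real.sq_sqrt hr]
  rw [eLpNorm_two_eq_sqrt_integral_sq ((memLp_two_iff_integrable_sq hmeas).2 hint), ← hsqrt,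
    ← Real.sqrt_mul' _ vd.coe_nonneg, ← Real.sqrt_mul' _ (by positivity)]
  gcongr

lemma eLpNorm_pow_div_factorial_sub_le (ha : HasLaw a (gaussianReal 0 va) P)
    (hb : HasLaw b (gaussianReal 0 vb) P) (hd : HasLaw (a - b) (gaussianReal 0 vd) P)
    {w ρ γ : ℝ} (hw : 0 ≤ w) (hva : va ≤ w ^ ρ⁻¹) (hvb : vb ≤ w ^ ρ⁻¹) (hvd : vd ≤ w ^ ρ⁻¹)
    {V : ℝ≥0∞} (hV : ENNReal.ofReal vd ≤ V) (hρ : 0 < ρ) (hργ : ρ ≤ γ) {n : ℕ} (hn : 1 ≤ n) :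
    eLpNorm (fun ω ↦ a ω ^ n / n.factorial - b ω ^ n / n.factorial) 2 P
      ≤ ENNReal.ofReal (√(gaussianPowDiffConst n) / n.factorial) * V ^ ((1 - ρ / γ) / 2)
        * ENNReal.ofReal (w ^ (1 / (2 * γ)) * w ^ (((n : ℝ) - 1) / (2 * ρ))) := by
  set c := √(gaussianPowDiffConst n) / n.factorial
  have hscale : √(w ^ ρ⁻¹) ^ (n - 1) = w ^ (((n : ℝ) - 1) / (2 * ρ)) := by
    rw [Real.sqrt_eq_rpow, ← Real.rpow_mul hw, ← Real.rpow_natCast, ← Real.rpow_mul hw,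
      Nat.cast_sub hn, Nat.cast_one]
    congr 1
    field_simp
  have hθ : 0 ≤ (1 - ρ / γ) / 2 := by
    have : ρ / γ ≤ 1 := (div_le_one (hρ.trans_le hργ)).2 hργ
    linarith
  have hfac : (fun ω ↦ a ω ^ n / n.factorial - b ω ^ n / n.factorial)
      = (n.factorial : ℝ)⁻¹ • fun ω ↦ a ω ^ n - b ω ^ n := by
    ext ω
    simp only [Pi.smul_apply, smul_eq_mul]
    ring
  rw [hfac, eLpNorm_const_smul, Real.enorm_of_nonneg (by positivity)]
  calc ENNReal.ofReal (n.factorial : ℝ)⁻¹ * eLpNorm _ 2 P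
      ≤ ENNReal.ofReal (n.factorial : ℝ)⁻¹
          * ENNReal.ofReal (√(gaussianPowDiffConst n) * √vd * √(w ^ ρ⁻¹) ^ (n - 1)) := by
        gcongr
        exact eLpNorm_pow_sub_pow_le ha hb hd hva hvb n
    _ = ENNReal.ofReal (c * √vd * w ^ (((n : ℝ) - 1) / (2 * ρ))) := by
        rw [← ENNReal.ofReal_mul (by positivity), hscale]
        congr 1
        ring
    _ ≤ ENNReal.ofReal (c * (vd ^ ((1 - ρ / γ) / 2) * w ^ (1 / (2 * γ)))
          * w ^ (((n : ℝ) - 1) / (2 * ρ))) := by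
        gcongr
        exact sqrt_le_rpow_mul_rpow_of_le_rpow_inv vd.coe_nonneg hw hvd hρ hργ
    _ = ENNReal.ofReal c * ENNReal.ofReal (vd ^ ((1 - ρ / γ) / 2))
          * ENNReal.ofReal (w ^ (1 / (2 * γ)) * w ^ (((n : ℝ) - 1) / (2 * ρ))) := by
        rw [← ENNReal.ofReal_mul (by positivity), ← ENNReal.ofReal_mul (by positivity)]
        congr 1
        ring
    _ ≤ _ := by
        rw [← ENNReal.ofReal_rpow_of_nonneg vd.coe_nonneg hθ]
        gcongr

end PowDiff

section Covariance

variable {Ω : Type*} [MeasurableSpace Ω] {P : Measure Ω}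

lemma inc2_integral_mul_eq (Z : ℝ → Ω → ℝ) {a b c d : ℝ} (ha : MemLp (Z a) 2 P)
    (hb : MemLp (Z b) 2 P) (hc : MemLp (Z c) 2 P) (hd : MemLp (Z d) 2 P) :
    inc2 (fun u v ↦ ∫ ω, Z u ω * Z v ω ∂P) a b c d
      = ∫ ω, (Z b ω - Z a ω) * (Z d ω - Z c ω) ∂P := by
  have hi {x y : ℝ} (hx : MemLp (Z x) 2 P) (hy : MemLp (Z y) 2 P) :
      Integrable (fun ω ↦ Z x ω * Z y ω) P :=
    hx.integrable_mul hy
  have hexpand : (fun ω ↦ (Z b ω - Z a ω) * (Z d ω - Z c ω))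
      = fun ω ↦ Z b ω * Z d ω - Z b ω * Z c ω - Z a ω * Z d ω + Z a ω * Z c ω := by
    ext ω
    ring
  have hbdc := (hi hb hd).sub (hi hb hc)
  rw [inc2, hexpand, integral_add (by exact hbdc.sub (hi ha hd)) (hi ha hc),
    integral_sub (by exact hbdc) (hi ha hd), integral_sub (hi hb hd) (hi hb hc)]

lemma ofReal_abs_inc2_le_Vinf (f : ℝ → ℝ → ℝ) {s t u v a b c e : ℝ} (ha : a ∈ Icc s t)
    (hb : b ∈ Icc s t) (hc : c ∈ Icc u v) (he : e ∈ Icc u v) (hab : a ≤ b) (hce : c ≤ e) :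
    ENNReal.ofReal |inc2 f a b c e| ≤ Vinf f s t u v :=
  le_iSup₂_of_le a ha <| le_iSup₂_of_le b hb <| le_iSup₂_of_le c hc <| le_iSup₂_of_le e he <|
    le_iSup₂_of_le hab hce le_rfl

lemma ofReal_integral_mul_self_sub_le_Vinf (Z : ℝ → Ω → ℝ) {s t : ℝ} (hs : MemLp (Z s) 2 P)
    (ht : MemLp (Z t) 2 P) (hst : s ≤ t) :
    ENNReal.ofReal (∫ ω, (Z t ω - Z s ω) * (Z t ω - Z s ω) ∂P)
      ≤ Vinf (fun u v ↦ ∫ ω, Z u ω * Z v ω ∂P) s t s t := by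
  have h := ofReal_abs_inc2_le_Vinf (fun u v ↦ ∫ ω, Z u ω * Z v ω ∂P) (left_mem_Icc.2 hst)
    (right_mem_Icc.2 hst) (left_mem_Icc.2 hst) (right_mem_Icc.2 hst) hst hst
  rw [inc2_integral_mul_eq Z hs ht hs ht] at h
  exact (ENNReal.ofReal_le_ofReal (le_abs_self _)).trans h

end Covariance

/-- `true` selects `X`, `false` selects `Y`: every finite linear combination of values of the
process `(X, Y)` on `[0,1]` is a centred Gaussian. -/
def IsCenteredGaussianPair {Ω : Type*} [MeasurableSpace Ω] (P : Measure Ω) (X Y : ℝ → Ω → ℝ) :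
    Prop :=
  ∀ (m : ℕ) (idx : Fin m → Bool × ℝ) (c : Fin m → ℝ),
    (∀ i, (idx i).2 ∈ Icc (0:ℝ) 1) →
    ∃ v : ℝ≥0,
      Measure.map
        (fun ω' => ∑ i, c i * (if (idx i).1 then X (idx i).2 ω' else Y (idx i).2 ω')) P
        = gaussianReal 0 v

lemma IsCenteredGaussianPair.exists_hasLaw_gaussianReal {Ω : Type*} [MeasurableSpace Ω]
    {P : Measure Ω} {X Y : ℝ → Ω → ℝ} (h : IsCenteredGaussianPair P X Y) {u v : ℝ}
    (hu : u ∈ Icc (0:ℝ) 1) (hv : v ∈ Icc (0:ℝ) 1) (α β γ δ : ℝ) {f : Ω → ℝ}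
    (hf : ∀ ω, f ω = α * X u ω + β * X v ω + γ * Y u ω + δ * Y v ω) :
    ∃ σ : ℝ≥0, HasLaw f (gaussianReal 0 σ) P := by
  obtain ⟨σ, hσ⟩ := h 4 ![(true, u), (true, v), (false, u), (false, v)] ![α, β, γ, δ]
    (fun i ↦ by fin_cases i <;> assumption)
  have hfσ : f = fun ω ↦ ∑ i, ![α, β, γ, δ] i *
      (if (![(true, u), (true, v), (false, u), (false, v)] i).1
        then X (![(true, u), (true, v), (false, u), (false, v)] i).2 ω
        else Y (![(true, u), (true, v), (false, u), (false, v)] i).2 ω) := by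
    ext ω
    simp [Fin.sum_univ_four, hf]
  subst hfσ
  exact ⟨σ, .of_map_ne_zero (hσ ▸ IsProbabilityMeasure.ne_zero _), hσ⟩

theorem diff_powers_L2_estimate_general
    {Ω : Type*} [MeasurableSpace Ω] (P : Measure Ω) [IsProbabilityMeasure P]
    (X Y : ℝ → Ω → ℝ)
    (hgauss : ∀ (m : ℕ) (idx : Fin m → Bool × ℝ) (c : Fin m → ℝ),
      (∀ i, (idx i).2 ∈ Icc (0:ℝ) 1) →
      ∃ v : ℝ≥0,
        Measure.map
          (fun ω' => ∑ i, c i * (if (idx i).1 then X (idx i).2 ω' else Y (idx i).2 ω')) P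
          = gaussianReal 0 v)
    (ρ γ : ℝ) (hρ : 1 ≤ ρ) (hργ : ρ < γ)
    (ω : ℝ → ℝ → ℝ → ℝ → ℝ)
    (hcov : ∀ Z W : ℝ → Ω → ℝ,
      (Z = X ∨ Z = Y ∨ Z = fun u ω' => X u ω' - Y u ω') →
      (W = X ∨ W = Y ∨ W = fun u ω' => X u ω' - Y u ω') →
      ∀ a b c d : ℝ, a ∈ Icc (0:ℝ) 1 → b ∈ Icc (0:ℝ) 1 → c ∈ Icc (0:ℝ) 1 →
        d ∈ Icc (0:ℝ) 1 → a ≤ b → c ≤ d →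
        |∫ ω', (Z b ω' - Z a ω') * (W d ω' - W c ω') ∂P| ^ ρ ≤ ω a b c d) :
    ∀ n : ℕ, 1 ≤ n → ∃ C : ℝ, 0 < C ∧
      ∀ s t : ℝ, 0 ≤ s → s < t → t ≤ 1 →
        eLpNorm
          (fun ω' => (X t ω' - X s ω') ^ n / (n.factorial : ℝ)
            - (Y t ω' - Y s ω') ^ n / (n.factorial : ℝ)) 2 P
          ≤ ENNReal.ofReal C
            * (Vinf (fun u v => ∫ ω', (X u ω' - Y u ω') * (X v ω' - Y v ω') ∂P) s t s t)
                ^ ((1 - ρ / γ) / 2)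
            * ENNReal.ofReal ((ω s t s t) ^ (1 / (2 * γ)) * (ω s t s t) ^ (((n:ℝ) - 1) / (2 * ρ))) := by
  intro n hn
  refine ⟨√(gaussianPowDiffConst n) / n.factorial + 1, by positivity, fun s t hs hst ht ↦ ?_⟩
  have hsI : s ∈ Icc (0:ℝ) 1 := ⟨hs, hst.le.trans ht⟩
  have htI : t ∈ Icc (0:ℝ) 1 := ⟨hs.trans hst.le, ht⟩
  have hρ0 : 0 < ρ := by linarith
  have hcov_st (Z) (hZ) := hcov Z Z hZ hZ s t s t hsI htI hsI htI hst.le hst.le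
  have hvar {f : Ω → ℝ} {v : ℝ≥0} (hf : HasLaw f (gaussianReal 0 v) P)
      (h : |∫ ω', f ω' * f ω' ∂P| ^ ρ ≤ ω s t s t) : (v : ℝ) ≤ ω s t s t ^ ρ⁻¹ :=
    integral_mul_self_of_hasLaw_gaussianReal hf ▸ le_rpow_inv_of_abs_rpow_le hρ0 h
  have hG : IsCenteredGaussianPair P X Y := hgauss
  obtain ⟨va, ha⟩ := hG.exists_hasLaw_gaussianReal htI hsI 1 (-1) 0 0
    (f := fun ω' ↦ X t ω' - X s ω') (by intro; ring)
  obtain ⟨vb, hb⟩ := hG.exists_hasLaw_gaussianReal htI hsI 0 0 1 (-1)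
    (f := fun ω' ↦ Y t ω' - Y s ω') (by intro; ring)
  obtain ⟨vd, hd⟩ := hG.exists_hasLaw_gaussianReal htI hsI 1 (-1) (-1) 1
    (f := fun ω' ↦ X t ω' - Y t ω' - (X s ω' - Y s ω')) (by intro; ring)
  obtain ⟨_, hZs⟩ := hG.exists_hasLaw_gaussianReal hsI hsI 1 0 (-1) 0
    (f := fun ω' ↦ X s ω' - Y s ω') (by intro; ring)
  obtain ⟨_, hZt⟩ := hG.exists_hasLaw_gaussianReal htI htI 1 0 (-1) 0
    (f := fun ω' ↦ X t ω' - Y t ω') (by intro; ring)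
  have hV := ofReal_integral_mul_self_sub_le_Vinf (fun u ω' ↦ X u ω' - Y u ω')
    hZs.hasGaussianLaw.memLp_two hZt.hasGaussianLaw.memLp_two hst.le
  rw [integral_mul_self_of_hasLaw_gaussianReal hd] at hV
  refine (eLpNorm_pow_div_factorial_sub_le ha hb
    (hd.congr (.of_forall fun ω' ↦ by simp only [Pi.sub_apply]; ring))
    ((Real.rpow_nonneg (abs_nonneg _) ρ).trans (hcov_st X (.inl rfl)))
    (hvar ha (hcov_st X (.inl rfl))) (hvar hb (hcov_st Y (.inr (.inl rfl))))
    (hvar hd (hcov_st _ (.inr (.inr rfl)))) hV hρ0 hργ.le hn).trans ?_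
  gcongr
  linarith

/-- let `(X,Y)` be a centred Gaussian process in `ℝ²` with continuous bounded
variation paths whose joint covariance has `ρ`-variation controlled by a 2D control `ω`,
`ρ < 2`, `γ > ρ`. With `X^{(n)}_{s,t} = (X_{s,t})ⁿ/n!`, for every `n` there is `C(n)`
such that `|X^{(n)}_{s,t} − Y^{(n)}_{s,t}|_{L²} ≤ C(n)·ε·ω([s,t]²)^{1/(2γ)}·ω([s,t]²)^{(n−1)/(2ρ)}`
for all `s < t`, where `ε² = V_∞(R_{X−Y},[s,t]²)^{1−ρ/γ}`. -/
theorem diff_powers_L2_estimate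
    {Ω : Type*} [MeasurableSpace Ω] (P : Measure Ω) [IsProbabilityMeasure P]
    (X Y : ℝ → Ω → ℝ)
    (hXm : ∀ u, Measurable (X u)) (hYm : ∀ u, Measurable (Y u))
    (hpathX : ∀ ω' : Ω, ContinuousOn (fun u => X u ω') (Icc 0 1) ∧
      BoundedVariationOn (fun u => X u ω') (Icc 0 1))
    (hpathY : ∀ ω' : Ω, ContinuousOn (fun u => Y u ω') (Icc 0 1) ∧
      BoundedVariationOn (fun u => Y u ω') (Icc 0 1))
    (hgauss : ∀ (m : ℕ) (idx : Fin m → Bool × ℝ) (c : Fin m → ℝ),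
      (∀ i, (idx i).2 ∈ Icc (0:ℝ) 1) →
      ∃ v : ℝ≥0,
        Measure.map
          (fun ω' => ∑ i, c i * (if (idx i).1 then X (idx i).2 ω' else Y (idx i).2 ω')) P
          = gaussianReal 0 v)
    (ρ γ : ℝ) (hρ : 1 ≤ ρ) (hρ2 : ρ < 2) (hργ : ρ < γ)
    (ω : ℝ → ℝ → ℝ → ℝ → ℝ) (hω : IsControl2 ω)
    (hcov : ∀ Z W : ℝ → Ω → ℝ,
      (Z = X ∨ Z = Y ∨ Z = fun u ω' => X u ω' - Y u ω') →
      (W = X ∨ W = Y ∨ W = fun u ω' => X u ω' - Y u ω') →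
      ∀ a b c d : ℝ, a ∈ Icc (0:ℝ) 1 → b ∈ Icc (0:ℝ) 1 → c ∈ Icc (0:ℝ) 1 →
        d ∈ Icc (0:ℝ) 1 → a ≤ b → c ≤ d →
        |∫ ω', (Z b ω' - Z a ω') * (W d ω' - W c ω') ∂P| ^ ρ ≤ ω a b c d) :
    ∀ n : ℕ, 1 ≤ n → ∃ C : ℝ, 0 < C ∧
      ∀ s t : ℝ, 0 ≤ s → s < t → t ≤ 1 →
        eLpNorm
          (fun ω' => (X t ω' - X s ω') ^ n / (n.factorial : ℝ)
            - (Y t ω' - Y s ω') ^ n / (n.factorial : ℝ)) 2 P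
          ≤ ENNReal.ofReal C
            * (Vinf (fun u v => ∫ ω', (X u ω' - Y u ω') * (X v ω' - Y v ω') ∂P) s t s t)
                ^ ((1 - ρ / γ) / 2)
            * ENNReal.ofReal ((ω s t s t) ^ (1 / (2 * γ)) * (ω s t s t) ^ (((n:ℝ) - 1) / (2 * ρ))) :=
  diff_powers_L2_estimate_general P X Y hgauss ρ γ hρ hργ ω hcov

end
end
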